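/- arXiv:cs/0610144 — 7 statements merged into one kernel-verified Lean document; each statement's English description precedes it below -/
import Mathlib

section
/- Suppose R = log m > H(p). Then there exists a constant K > 0 such that for every n ≥ 1 and every integer Δ with 0 ≤ Δ ≤ n−1, the probability that there exists a string x̃ ∈ X^n lying in the same bin as the source string x^n, satisfying p(x̃) ≥ p(x^n), and differing from x^n in at least one of the first n−Δ positions, is at most K·exp(−Δ·E_ML(R)). -/
/-!
An ML error whose first discrepancy with the source `x` is at position `i` needs a competitor
`x'` that agrees with `x` before `i` and is at least as likely. Causality makes the bins of `x`
and `x'` collide at the `n - i` positions `j ≥ i`, independently with probability `1/m` each.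
Gallager's bounds `min 1 a ≤ a ^ ρ` and `1{p x ≤ p x'} ≤ (p x' / p x) ^ (1/(1+ρ))` turn the union
bound over competitors into a product over positions, so this event has probability at most
`exp (-(n - i) E₀(ρ))` with `E₀(ρ) = ρ log m - (1+ρ) log ∑ₐ p a ^ (1/(1+ρ))`; summing over
`i < n - Δ` is a geometric series. `E_ML(R) > 0` because `E₀(0) = 0` and `E₀'(0) = R - H(p) > 0`.
-/

open Classical
open scoped BigOperators

noncomputable section

/-- `q` is a probability mass function on `Z`. -/
def IsPMF {Z : Type*} [Fintype Z] (q : Z → ℝ) : Prop :=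
  (∀ z, 0 ≤ q z) ∧ ∑ z, q z = 1

/-- The probability of the event `A` on a finite outcome space with weights `P`. -/
def prob {Ω : Type*} [Fintype Ω] (P : Ω → ℝ) (A : Ω → Prop) : ℝ :=
  ∑ ω, if A ω then P ω else 0

/-- A causal random binning scheme of length `n` with `m` bins: the `j`-th bin index of a
string is a function of its length-`(j+1)` prefix. -/
abbrev BinScheme (X : Type*) (n m : ℕ) : Type _ :=
  (j : Fin n) → (Fin (j.val + 1) → X) → Fin m

/-- The length-`(j+1)` prefix of a string of length `n`. -/
def pref {X : Type*} {n : ℕ} (w : Fin n → X) (j : Fin n) : Fin (j.val + 1) → X :=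
  fun i => w ⟨i.val, lt_of_le_of_lt (Nat.lt_succ_iff.mp i.isLt) j.isLt⟩

/-- Two strings lie in the same bin iff all their bin indices agree. -/
def sameBin {X : Type*} {n m : ℕ} (b : BinScheme X n m) (w x : Fin n → X) : Prop :=
  ∀ j : Fin n, b j (pref w j) = b j (pref x j)

/-- Shannon entropy in nats. -/
def entropy {Z : Type*} [Fintype Z] (q : Z → ℝ) : ℝ :=
  - ∑ z, q z * Real.log (q z)

/-- `E_ML(R) = sup_{ρ ∈ [0,1]} [ρR − (1+ρ) log Σ_x p(x)^{1/(1+ρ)}]`. -/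
def EML {X : Type*} [Fintype X] (p : X → ℝ) (R : ℝ) : ℝ :=
  sSup ((fun ρ : ℝ => ρ * R - (1 + ρ) * Real.log (∑ x, p x ^ (1 / (1 + ρ)))) ''
    Set.Icc 0 1)

open Finset

section Prob

variable {Ω : Type*} [Fintype Ω] {P : Ω → ℝ}

lemma prob_mono (hP : ∀ ω, 0 ≤ P ω) {A B : Ω → Prop} (h : ∀ ω, A ω → B ω) :
    prob P A ≤ prob P B :=
  sum_le_sum fun ω _ => by
    split_ifs with hA hB
    · exact le_rfl
    · exact absurd (h ω hA) hB
    · exact hP ω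
    · exact le_rfl

lemma prob_exists_le_sum {ι : Type*} (hP : ∀ ω, 0 ≤ P ω) (s : Finset ι) (A : ι → Ω → Prop) :
    prob P (fun ω => ∃ i ∈ s, A i ω) ≤ ∑ i ∈ s, prob P (A i) := by
  simp only [prob]
  rw [sum_comm]
  refine sum_le_sum fun ω _ => ?_
  have hnn : ∀ i ∈ s, 0 ≤ if A i ω then P ω else 0 := fun i _ => by split_ifs <;> simp [hP ω]
  split_ifs with h
  · obtain ⟨i, hi, hAi⟩ := h
    simpa [hAi] using single_le_sum hnn hi
  · exact sum_nonneg hnn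

end Prob

def uniformWeight (β : Type*) [Fintype β] : β → ℝ := fun _ => (Fintype.card β : ℝ)⁻¹

lemma prob_uniformWeight {β : Type*} [Fintype β] (A : β → Prop) [DecidablePred A] :
    prob (uniformWeight β) A = (univ.filter A).card / Fintype.card β := by
  rw [prob, div_eq_mul_inv, ← nsmul_eq_mul, ← sum_const, sum_filter]
  congr!

lemma prob_uniformWeight_nonneg {β : Type*} [Fintype β] (A : β → Prop) :
    0 ≤ prob (uniformWeight β) A := by
  classical
  rw [prob_uniformWeight]
  positivity

lemma prob_uniformWeight_le_one {β : Type*} [Fintype β] (A : β → Prop) :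
    prob (uniformWeight β) A ≤ 1 := by
  classical
  rw [prob_uniformWeight]
  exact div_le_one_of_le₀ (by exact_mod_cast card_filter_le _ _) (Nat.cast_nonneg _)

lemma prob_prod_div_card {α β : Type*} [Fintype α] [Fintype β] (P : α → ℝ) (A : α × β → Prop) :
    prob (fun ω : α × β => P ω.1 / Fintype.card β) A
      = ∑ a, P a * prob (uniformWeight β) (fun b => A (a, b)) := by
  simp only [prob, Fintype.sum_prod_type, mul_sum, uniformWeight, mul_ite, mul_zero, div_eq_mul_inv]

lemma prob_uniformWeight_pi_forall {ι : Type*} [Fintype ι] [DecidableEq ι] {β : ι → Type*}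
    [∀ j, Fintype (β j)] (A : ∀ j, β j → Prop) :
    prob (uniformWeight (∀ j, β j)) (fun b => ∀ j, A j (b j))
      = ∏ j, prob (uniformWeight (β j)) (A j) := by
  simp only [prob, uniformWeight, Fintype.prod_sum]
  refine sum_congr rfl fun b _ => ?_
  rw [Fintype.card_pi, Nat.cast_prod, ← prod_inv_distrib]
  split_ifs with h
  · exact (prod_congr rfl fun j _ => if_pos (h j)).symm
  · push Not at h
    obtain ⟨j, hj⟩ := h
    exact (prod_eq_zero (mem_univ j) (if_neg hj)).symm

lemma card_apply_eq_apply_mul_card {A M : Type*} [Fintype A] [DecidableEq A] [Fintype M]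
    {u v : A} (huv : u ≠ v) :
    Fintype.card {f : A → M // f u = f v} * Fintype.card M = Fintype.card (A → M) := by
  rw [← Fintype.card_prod]
  refine Fintype.card_congr
    { toFun := fun fc => Function.update fc.1.1 v fc.2
      invFun := fun g => (⟨Function.update g v (g u), by simp [huv]⟩, g v)
      left_inv := fun ⟨⟨f, hf⟩, c⟩ => by simp [Function.update_of_ne huv, hf]
      right_inv := fun g => by ext a; simp }

lemma prob_uniformWeight_apply_eq_apply {A M : Type*} [Fintype A] [DecidableEq A] [Fintype M]
    [Nonempty M] {u v : A} (huv : u ≠ v) :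
    prob (uniformWeight (A → M)) (fun f => f u = f v) = (Fintype.card M : ℝ)⁻¹ := by
  have hne : Fintype.card {f : A → M // f u = f v} ≠ 0 :=
    @Fintype.card_ne_zero _ _ ⟨⟨fun _ => Classical.arbitrary M, rfl⟩⟩
  rw [prob_uniformWeight, ← Fintype.card_subtype, ← card_apply_eq_apply_mul_card huv, Nat.cast_mul,
    div_mul_cancel_left₀ (Nat.cast_ne_zero.mpr hne)]

lemma Fin.prod_ite_le_eq_pow {M : Type*} [CommMonoid M] {n : ℕ} (i : Fin n) (a : M) :
    ∏ j : Fin n, (if i ≤ j then a else 1) = a ^ (n - i) := by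
  rw [← prod_filter, Finset.prod_const, ← Fin.card_Ici]
  congr 2
  ext j
  simp

lemma exists_first_ne {ι α : Type*} [LinearOrder ι] [WellFoundedLT ι] {x x' : ι → α} {i : ι}
    (h : x' i ≠ x i) : ∃ k ≤ i, (∀ j < k, x' j = x j) ∧ x' k ≠ x k := by
  obtain ⟨k, hk, hmin⟩ := wellFounded_lt.has_min {j | x' j ≠ x j} ⟨i, h⟩
  exact ⟨k, not_lt.mp fun hik => hmin i h hik,
    fun j hj => not_not.mp fun hne => hmin j hne hj, hk⟩

lemma Fin.sum_pow_sub_le_div_one_sub {r : ℝ} (hr0 : 0 ≤ r) (hr1 : r < 1) (n Δ : ℕ) :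
    ∑ i ∈ univ.filter (fun i : Fin n => (i : ℕ) < n - Δ), r ^ (n - (i : ℕ))
      ≤ r ^ (Δ + 1) / (1 - r) := by
  rw [← sum_image (g := fun i : Fin n => n - (i : ℕ)) fun i _ j _ hij => by simp at hij; omega]
  refine (sum_le_sum_of_subset_of_nonneg ?_ fun _ _ _ => pow_nonneg hr0 _).trans
    (geom_sum_Ico_le_of_lt_one (n := n + 1) hr0 hr1)
  intro k hk
  simp only [mem_image, mem_filter, mem_univ, true_and] at hk
  obtain ⟨i, hi, rfl⟩ := hk
  simp only [mem_Ico]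
  omega

lemma pref_ne_of_le {X : Type*} {n : ℕ} {x x' : Fin n → X} {i j : Fin n} (hij : i ≤ j)
    (hne : x' i ≠ x i) : pref x' j ≠ pref x j := fun h =>
  hne (congrFun h ⟨i, Nat.lt_succ_of_le hij⟩)

lemma prob_sameBin_le {X : Type*} [Fintype X] [DecidableEq X] {n m : ℕ} [NeZero m]
    {x x' : Fin n → X} {i : Fin n} (hne : x' i ≠ x i) :
    prob (uniformWeight (BinScheme X n m)) (fun b => sameBin b x' x) ≤ ((m : ℝ)⁻¹) ^ (n - i) := by
  calc prob (uniformWeight (BinScheme X n m)) (fun b => sameBin b x' x)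
      = ∏ j : Fin n, prob (uniformWeight ((Fin (j + 1) → X) → Fin m))
          (fun f => f (pref x' j) = f (pref x j)) :=
        prob_uniformWeight_pi_forall (fun (j : Fin n) (f : (Fin (j + 1) → X) → Fin m) =>
          f (pref x' j) = f (pref x j))
    _ ≤ ∏ j : Fin n, (if i ≤ j then (m : ℝ)⁻¹ else 1) := by
        refine prod_le_prod (fun j _ => prob_uniformWeight_nonneg _) fun j _ => ?_
        split_ifs with hij
        · rw [prob_uniformWeight_apply_eq_apply (pref_ne_of_le hij hne), Fintype.card_fin]
        · exact prob_uniformWeight_le_one _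
    _ = ((m : ℝ)⁻¹) ^ (n - i) := Fin.prod_ite_le_eq_pow i _

def prefixCylinder {X : Type*} [Fintype X] [DecidableEq X] {n : ℕ} (x : Fin n → X) (i : Fin n) :
    Finset (Fin n → X) :=
  Fintype.piFinset fun j => if j < i then {x j} else univ

section PrefixCylinder

variable {X : Type*} [Fintype X] [DecidableEq X] {n : ℕ} {x x' : Fin n → X} {i : Fin n}

lemma mem_prefixCylinder : x' ∈ prefixCylinder x i ↔ ∀ j < i, x' j = x j := by
  simp only [prefixCylinder, Fintype.mem_piFinset]
  refine forall_congr' fun j => ?_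
  split_ifs <;> simp [*]

lemma sum_prod_prefixCylinder (q : X → ℝ) :
    ∑ x' ∈ prefixCylinder x i, ∏ j, q (x' j) = ∏ j, if j < i then q (x j) else ∑ a, q a := by
  rw [prefixCylinder, ← prod_univ_sum]
  refine prod_congr rfl fun j _ => ?_
  split_ifs <;> simp

end PrefixCylinder

namespace Real

lemma min_one_le_rpow {a ρ : ℝ} (ha : 0 ≤ a) (hρ0 : 0 ≤ ρ) (hρ1 : ρ ≤ 1) : min 1 a ≤ a ^ ρ := by
  rcases le_or_gt 1 a with h | h
  · exact (min_le_left _ _).trans (one_le_rpow h hρ0)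
  · rw [min_eq_right h.le]
    simpa using rpow_le_rpow_of_exponent_ge' ha h.le hρ0 hρ1

lemma mul_min_one_le_rpow {P c N S s ρ : ℝ} (hP : 0 ≤ P) (hc : 0 ≤ c) (hN : 0 ≤ N)
    (hρ0 : 0 ≤ ρ) (hρ1 : ρ ≤ 1) (hs : s * (1 + ρ) = 1) (hNS : P ^ s * N ≤ S) :
    P * min 1 (c * N) ≤ c ^ ρ * P ^ s * S ^ ρ := by
  have hS : 0 ≤ S := (mul_nonneg (rpow_nonneg hP s) hN).trans hNS
  rcases hP.eq_or_lt with rfl | hP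
  · rw [zero_mul]
    positivity
  have hPs : 0 < P ^ s := rpow_pos_of_pos hP s
  have hPρ : P = P ^ s * P ^ (s * ρ) := by
    rw [← rpow_add hP, ← mul_one_add, hs, rpow_one]
  calc P * min 1 (c * N) ≤ P * (c * N) ^ ρ :=
        mul_le_mul_of_nonneg_left (min_one_le_rpow (by positivity) hρ0 hρ1) hP.le
    _ ≤ P * (c * (S / P ^ s)) ^ ρ := by
        gcongr
        rwa [le_div_iff₀' hPs]
    _ = c ^ ρ * P ^ s * S ^ ρ := by
        rw [mul_rpow hc (by positivity), div_rpow hS hPs.le, ← rpow_mul hP.le]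
        nth_rewrite 1 [hPρ]
        field_simp

end Real

section SourceExponent

open Real Set

variable {X : Type*} [Fintype X] {p : X → ℝ}

lemma IsPMF.exists_pos (hp : IsPMF p) : ∃ a, 0 < p a := by
  by_contra! h
  have : ∑ a, p a = 0 := sum_eq_zero fun a _ => le_antisymm (h a) (hp.1 a)
  linarith [hp.2]

lemma IsPMF.sum_rpow_pos (hp : IsPMF p) (t : ℝ) : 0 < ∑ a, p a ^ t := by
  obtain ⟨a, ha⟩ := hp.exists_pos
  exact sum_pos' (fun b _ => rpow_nonneg (hp.1 b) t) ⟨a, mem_univ a, rpow_pos_of_pos ha t⟩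

/-- `ρ R - E₀(ρ)` in Gallager's notation. -/
def sourceExponent (p : X → ℝ) (R ρ : ℝ) : ℝ :=
  ρ * R - (1 + ρ) * log (∑ x, p x ^ (1 / (1 + ρ)))

lemma exp_neg_sourceExponent_log (hp : IsPMF p) {m ρ : ℝ} (hm : 0 < m) :
    exp (-sourceExponent p (log m) ρ) = (m ^ ρ)⁻¹ * (∑ x, p x ^ (1 / (1 + ρ))) ^ (1 + ρ) := by
  rw [sourceExponent, rpow_def_of_pos hm, rpow_def_of_pos (hp.sum_rpow_pos _), ← exp_neg,
    ← exp_add]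
  ring_nf

lemma continuousOn_sourceExponent (hp : IsPMF p) (R : ℝ) :
    ContinuousOn (sourceExponent p R) (Icc 0 1) := by
  have hpos : ∀ ρ ∈ Icc (0 : ℝ) 1, 0 < 1 + ρ := fun ρ hρ => by linarith [hρ.1]
  have hexp : ContinuousOn (fun ρ : ℝ => 1 / (1 + ρ)) (Icc 0 1) :=
    continuousOn_const.div (continuousOn_const.add continuousOn_id) fun ρ hρ => (hpos ρ hρ).ne'
  refine (continuousOn_id.mul continuousOn_const).sub
    ((continuousOn_const.add continuousOn_id).mul (ContinuousOn.log ?_ fun ρ _ =>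
      (hp.sum_rpow_pos _).ne'))
  exact continuousOn_finsetSum _ fun a _ => continuousOn_const.rpow hexp fun ρ hρ =>
    Or.inr (one_div_pos.mpr (hpos ρ hρ))

lemma isGreatest_EML (hp : IsPMF p) (R : ℝ) :
    IsGreatest (sourceExponent p R '' Icc 0 1) (EML p R) := by
  obtain ⟨ρ, hρ, hmax⟩ := isCompact_Icc.exists_isMaxOn (nonempty_Icc.mpr zero_le_one)
    (continuousOn_sourceExponent hp R)
  have hgreatest : IsGreatest (sourceExponent p R '' Icc 0 1) (sourceExponent p R ρ) :=
    ⟨mem_image_of_mem _ hρ, by rintro _ ⟨ρ', hρ', rfl⟩; exact hmax hρ'⟩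
  rwa [EML, ← hgreatest.csSup_eq] at *

lemma sourceExponent_zero (hp : IsPMF p) (R : ℝ) : sourceExponent p R 0 = 0 := by
  simp [sourceExponent, hp.2]

lemma hasDerivAt_sum_rpow_one_div (hp0 : ∀ a, 0 ≤ p a) :
    HasDerivAt (fun ρ : ℝ => ∑ a, p a ^ (1 / (1 + ρ))) (∑ a, -(p a * log (p a))) 0 := by
  refine HasDerivAt.fun_sum fun a _ => ?_
  rcases (hp0 a).eq_or_lt with h | h
  · rw [← h, zero_mul, neg_zero]
    refine (hasDerivAt_const (0 : ℝ) (0 : ℝ)).congr_of_eventuallyEq ?_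
    filter_upwards [Ioi_mem_nhds (show (-1 : ℝ) < 0 by norm_num)] with ρ hρ
    exact zero_rpow (one_div_pos.mpr (by linarith [mem_Ioi.mp hρ])).ne'
  · have hinv : HasDerivAt (fun ρ : ℝ => 1 / (1 + ρ)) (-1) 0 :=
      ((hasDerivAt_const (0 : ℝ) (1 : ℝ)).fun_div ((hasDerivAt_id' (0 : ℝ)).const_add 1)
        (by norm_num)).congr_deriv (by norm_num)
    exact (hinv.const_rpow h).congr_deriv (by simp [mul_comm])

lemma hasDerivAt_sourceExponent (hp : IsPMF p) (R : ℝ) :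
    HasDerivAt (sourceExponent p R) (R - entropy p) 0 := by
  have hS := (hasDerivAt_sum_rpow_one_div hp.1).log (by simp [hp.2])
  exact (((hasDerivAt_id' (0 : ℝ)).mul_const R).sub
    (((hasDerivAt_id' (0 : ℝ)).const_add 1).mul hS)).congr_deriv (by simp [entropy, hp.2])

lemma exists_sourceExponent_pos (hp : IsPMF p) {R : ℝ} (hRH : entropy p < R) :
    ∃ ρ ∈ Icc (0 : ℝ) 1, 0 < sourceExponent p R ρ := by
  have hslope := (hasDerivAt_sourceExponent hp R).tendsto_slope_zero_right
  obtain ⟨ρ, hslope_pos, hρ⟩ := ((hslope.eventually (lt_mem_nhds (sub_pos.mpr hRH))).and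
    (Ioo_mem_nhdsGT zero_lt_one)).exists
  refine ⟨ρ, Ioo_subset_Icc_self hρ, ?_⟩
  rw [zero_add, sourceExponent_zero hp, sub_zero, smul_eq_mul] at hslope_pos
  exact pos_of_mul_pos_right hslope_pos (inv_pos.mpr hρ.1).le

end SourceExponent

section Gallager

open Real

variable {X : Type*} [Fintype X] [DecidableEq X] {p : X → ℝ} {ρ c : ℝ} {n : ℕ}

lemma prod_mul_min_one_card_le (hp : IsPMF p) (hρ0 : 0 ≤ ρ) (hρ1 : ρ ≤ 1) (hc : 0 ≤ c)
    {x : Fin n → X} {i : Fin n} {T : Finset (Fin n → X)} (hT : T ⊆ prefixCylinder x i)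
    (hTp : ∀ x' ∈ T, ∏ j, p (x j) ≤ ∏ j, p (x' j)) :
    (∏ j, p (x j)) * min 1 (c * T.card) ≤ c ^ ρ * ∏ j, if j < i then p (x j)
      else (∑ a, p a ^ (1 / (1 + ρ))) ^ ρ * p (x j) ^ (1 / (1 + ρ)) := by
  set s := 1 / (1 + ρ) with hs_def
  have hs0 : 0 < s := by positivity
  have hs : s * (1 + ρ) = 1 := by rw [hs_def]; field_simp
  set g := ∑ a, p a ^ s
  have hg : 0 ≤ g := sum_nonneg fun a _ => rpow_nonneg (hp.1 a) s
  have hprod : 0 ≤ ∏ j, p (x j) := prod_nonneg fun j _ => hp.1 _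
  -- each competitor `x'` is counted with weight `(p x' / p x) ^ s ≥ 1`
  have hNS : (∏ j, p (x j)) ^ s * T.card ≤ ∏ j, (if j < i then p (x j) ^ s else g) :=
    calc (∏ j, p (x j)) ^ s * T.card = ∑ _x' ∈ T, (∏ j, p (x j)) ^ s := by
          rw [sum_const, nsmul_eq_mul, mul_comm]
      _ ≤ ∑ x' ∈ T, ∏ j, p (x' j) ^ s := sum_le_sum fun x' hx' => by
          rw [finsetProd_rpow _ _ (fun j _ => hp.1 _)]
          exact rpow_le_rpow hprod (hTp x' hx') hs0.le
      _ ≤ ∑ x' ∈ prefixCylinder x i, ∏ j, p (x' j) ^ s :=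
          sum_le_sum_of_subset_of_nonneg hT fun x' _ _ =>
            prod_nonneg fun j _ => rpow_nonneg (hp.1 _) s
      _ = ∏ j, (if j < i then p (x j) ^ s else g) := sum_prod_prefixCylinder (p · ^ s)
  calc (∏ j, p (x j)) * min 1 (c * T.card)
      ≤ c ^ ρ * (∏ j, p (x j)) ^ s * (∏ j, (if j < i then p (x j) ^ s else g)) ^ ρ :=
        mul_min_one_le_rpow hprod hc (Nat.cast_nonneg _) hρ0 hρ1 hs hNS
    _ = c ^ ρ * ∏ j, if j < i then p (x j) else g ^ ρ * p (x j) ^ s := by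
        rw [mul_assoc, ← finsetProd_rpow _ _ (fun j _ => hp.1 _),
          ← finsetProd_rpow _ _ (fun j _ => by split_ifs; exacts [rpow_nonneg (hp.1 _) s, hg]),
          ← prod_mul_distrib]
        refine congrArg _ (prod_congr rfl fun j _ => ?_)
        split_ifs
        · rw [← rpow_mul (hp.1 _), ← rpow_add' (hp.1 _) (by positivity), ← mul_one_add, hs,
            rpow_one]
        · exact mul_comm _ _

lemma sum_mul_min_one_card_le (hp : IsPMF p) (hρ0 : 0 ≤ ρ) (hρ1 : ρ ≤ 1) (hc : 0 ≤ c)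
    (i : Fin n) (T : (Fin n → X) → Finset (Fin n → X)) (hT : ∀ x, T x ⊆ prefixCylinder x i)
    (hTp : ∀ x, ∀ x' ∈ T x, ∏ j, p (x j) ≤ ∏ j, p (x' j)) :
    ∑ x : Fin n → X, (∏ j, p (x j)) * min 1 (c * (T x).card)
      ≤ c ^ ρ * ((∑ a, p a ^ (1 / (1 + ρ))) ^ (1 + ρ)) ^ (n - i) := by
  set g := ∑ a, p a ^ (1 / (1 + ρ))
  have hg : 0 ≤ g := sum_nonneg fun a _ => rpow_nonneg (hp.1 a) _
  have hfactor : ∀ j : Fin n, ∑ a, (if j < i then p a else g ^ ρ * p a ^ (1 / (1 + ρ)))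
      = if i ≤ j then g ^ (1 + ρ) else 1 := fun j => by
    by_cases hj : j < i
    · simp [hj, hp.2]
    · simp only [if_neg hj, if_pos (not_lt.mp hj), ← mul_sum]
      rw [rpow_one_add' hg (by positivity), mul_comm]
  calc ∑ x : Fin n → X, (∏ j, p (x j)) * min 1 (c * (T x).card)
      ≤ ∑ x : Fin n → X,
          c ^ ρ * ∏ j, if j < i then p (x j) else g ^ ρ * p (x j) ^ (1 / (1 + ρ)) :=
        sum_le_sum fun x _ => prod_mul_min_one_card_le hp hρ0 hρ1 hc (hT x) (hTp x)
    _ = c ^ ρ * (g ^ (1 + ρ)) ^ (n - i) := by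
        rw [← mul_sum, ← Fintype.prod_sum fun j a =>
            if j < i then p a else g ^ ρ * p a ^ (1 / (1 + ρ)), Fintype.prod_congr _ _ hfactor,
          Fin.prod_ite_le_eq_pow]

end Gallager

section ErrorEvent

variable {X : Type*} [Fintype X] [DecidableEq X] {n m : ℕ}

/-- The ML decoding error event in which the first wrongly decoded symbol is `x i`. -/
def MLErrorAt (p : X → ℝ) (b : BinScheme X n m) (x : Fin n → X) (i : Fin n) : Prop :=
  ∃ x' ∈ prefixCylinder x i, x' i ≠ x i ∧ sameBin b x' x ∧ ∏ j, p (x j) ≤ ∏ j, p (x' j)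

def competitors (p : X → ℝ) (x : Fin n → X) (i : Fin n) : Finset (Fin n → X) :=
  (prefixCylinder x i).filter fun x' => x' i ≠ x i ∧ ∏ j, p (x j) ≤ ∏ j, p (x' j)

lemma prob_mlErrorAt_le_min [NeZero m] (p : X → ℝ) (x : Fin n → X) (i : Fin n) :
    prob (uniformWeight (BinScheme X n m)) (fun b => MLErrorAt p b x i)
      ≤ min 1 (((m : ℝ) ^ (n - i))⁻¹ * (competitors p x i).card) := by
  refine le_min (prob_uniformWeight_le_one _) ?_
  have hsub : ∀ b : BinScheme X n m,
      MLErrorAt p b x i → ∃ x' ∈ competitors p x i, sameBin b x' x :=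
    fun b ⟨x', hcyl, hne, hbin, hle⟩ => ⟨x', mem_filter.mpr ⟨hcyl, hne, hle⟩, hbin⟩
  have hw : ∀ b, 0 ≤ uniformWeight (BinScheme X n m) b := fun _ => by
    simp only [uniformWeight]; positivity
  calc prob (uniformWeight (BinScheme X n m)) (fun b => MLErrorAt p b x i)
      ≤ ∑ x' ∈ competitors p x i, prob (uniformWeight (BinScheme X n m))
          (fun b => sameBin b x' x) :=
        (prob_mono hw hsub).trans (prob_exists_le_sum hw _ _)
    _ ≤ ∑ _x' ∈ competitors p x i, ((m : ℝ)⁻¹) ^ (n - i) :=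
        sum_le_sum fun x' hx' => prob_sameBin_le (mem_filter.mp hx').2.1
    _ = ((m : ℝ) ^ (n - i))⁻¹ * (competitors p x i).card := by
        rw [sum_const, nsmul_eq_mul, inv_pow, mul_comm]

lemma exists_mlErrorAt_of_sameBin {b : BinScheme X n m} {x x' : Fin n → X} {i : Fin n}
    (hbin : sameBin b x' x) (hle : ∏ j, p (x j) ≤ ∏ j, p (x' j)) (hne : x' i ≠ x i) :
    ∃ k ≤ i, MLErrorAt p b x k := by
  obtain ⟨k, hki, hagree, hnek⟩ := exists_first_ne hne
  exact ⟨k, hki, x', mem_prefixCylinder.mpr hagree, hnek, hbin, hle⟩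

open Real in
lemma prob_mlErrorAt_le [NeZero m] (hp : IsPMF p) {ρ : ℝ} (hρ : ρ ∈ Set.Icc (0 : ℝ) 1)
    (i : Fin n) :
    prob (fun ω : (Fin n → X) × BinScheme X n m =>
        (∏ j, p (ω.1 j)) / (Fintype.card (BinScheme X n m) : ℝ))
      (fun ω => MLErrorAt p ω.2 ω.1 i)
      ≤ exp (-sourceExponent p (log m) ρ) ^ (n - i) := by
  have hm : (0 : ℝ) < m := Nat.cast_pos.mpr (Nat.pos_of_ne_zero (NeZero.ne m))
  rw [prob_prod_div_card (fun x : Fin n → X => ∏ j, p (x j)), exp_neg_sourceExponent_log hp hm,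
    mul_pow]
  calc ∑ x : Fin n → X, (∏ j, p (x j)) *
        prob (uniformWeight (BinScheme X n m)) (fun b => MLErrorAt p b x i)
      ≤ ∑ x : Fin n → X, (∏ j, p (x j)) *
          min 1 (((m : ℝ) ^ (n - i))⁻¹ * (competitors p x i).card) :=
        sum_le_sum fun x _ => mul_le_mul_of_nonneg_left (prob_mlErrorAt_le_min p x i)
          (prod_nonneg fun j _ => hp.1 _)
    _ ≤ (((m : ℝ) ^ (n - i))⁻¹) ^ ρ * ((∑ a, p a ^ (1 / (1 + ρ))) ^ (1 + ρ)) ^ (n - i) :=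
        sum_mul_min_one_card_le hp hρ.1 hρ.2 (by positivity) i _
          (fun x => filter_subset _ _) fun x x' hx' => (mem_filter.mp hx').2.2
    _ = ((m : ℝ) ^ ρ)⁻¹ ^ (n - i) * ((∑ a, p a ^ (1 / (1 + ρ))) ^ (1 + ρ)) ^ (n - i) := by
        rw [inv_rpow (by positivity), inv_pow, rpow_pow_comm hm.le]

end ErrorEvent

open Real in
theorem statement0_general {X : Type*} [Fintype X] [DecidableEq X]
    (p : X → ℝ) (hp : IsPMF p)
    (m : ℕ) (hm : 2 ≤ m) (R : ℝ) (hR : R = Real.log m) (hRH : entropy p < R) :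
    ∃ K : ℝ, 0 < K ∧
      ∀ n : ℕ, 1 ≤ n → ∀ Δ : ℕ, Δ ≤ n - 1 →
        prob
          (fun ω : (Fin n → X) × BinScheme X n m =>
            (∏ i, p (ω.1 i)) / (Fintype.card (BinScheme X n m) : ℝ))
          (fun ω => ∃ x' : Fin n → X,
            sameBin ω.2 x' ω.1 ∧
            (∏ i, p (ω.1 i)) ≤ (∏ i, p (x' i)) ∧
            ∃ i : Fin n, (i : ℕ) < n - Δ ∧ x' i ≠ ω.1 i)
        ≤ K * Real.exp (-(Δ : ℝ) * EML p R) := by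
  have : NeZero m := ⟨by omega⟩
  obtain ⟨⟨ρ, hρ, hρE⟩, hEML_ge⟩ := isGreatest_EML hp R
  obtain ⟨ρ₀, hρ₀, hpos⟩ := exists_sourceExponent_pos hp hRH
  have hE : 0 < EML p R := hpos.trans_le (hEML_ge ⟨ρ₀, hρ₀, rfl⟩)
  set r := exp (-EML p R)
  have hr1 : r < 1 := exp_lt_one_iff.mpr (neg_lt_zero.mpr hE)
  refine ⟨r / (1 - r), div_pos (exp_pos _) (sub_pos.mpr hr1), fun n _ Δ _ => ?_⟩
  have hP : ∀ ω : (Fin n → X) × BinScheme X n m,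
      0 ≤ (∏ i, p (ω.1 i)) / (Fintype.card (BinScheme X n m) : ℝ) := fun ω =>
    div_nonneg (prod_nonneg fun i _ => hp.1 _) (Nat.cast_nonneg _)
  calc _ ≤ prob _ (fun ω => ∃ i ∈ univ.filter (fun i : Fin n => (i : ℕ) < n - Δ),
          MLErrorAt p ω.2 ω.1 i) := prob_mono hP fun ω ⟨x', hbin, hle, i, hi, hne⟩ => by
        obtain ⟨k, hki, hk⟩ := exists_mlErrorAt_of_sameBin hbin hle hne
        exact ⟨k, mem_filter.mpr ⟨mem_univ k, lt_of_le_of_lt hki hi⟩, hk⟩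
    _ ≤ ∑ i ∈ univ.filter (fun i : Fin n => (i : ℕ) < n - Δ), r ^ (n - (i : ℕ)) :=
        (prob_exists_le_sum hP _ _).trans (sum_le_sum fun i _ => by
          simpa only [← hR, hρE] using prob_mlErrorAt_le (m := m) hp hρ i)
    _ ≤ r ^ (Δ + 1) / (1 - r) := Fin.sum_pow_sub_le_div_one_sub (exp_pos _).le hr1 n Δ
    _ = r / (1 - r) * exp (-(Δ : ℝ) * EML p R) := by
        rw [pow_succ, ← exp_nat_mul]
        ring_nf

/-- Streaming point-to-point coding, ML decoding (Theorem 2): if `R = log m > H(p)`,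
the probability that some string in the bin of the source, at least as likely as the
source string, differs from it within the first `n − Δ` positions decays like
`exp(−Δ E_ML(R))`. -/
theorem statement0 {X : Type*} [Fintype X] [DecidableEq X] [Nonempty X]
    (p : X → ℝ) (hp : IsPMF p)
    (m : ℕ) (hm : 2 ≤ m) (R : ℝ) (hR : R = Real.log m) (hRH : entropy p < R) :
    ∃ K : ℝ, 0 < K ∧
      ∀ n : ℕ, 1 ≤ n → ∀ Δ : ℕ, Δ ≤ n - 1 →
        prob
          (fun ω : (Fin n → X) × BinScheme X n m =>
            (∏ i, p (ω.1 i)) / (Fintype.card (BinScheme X n m) : ℝ))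
          (fun ω => ∃ x' : Fin n → X,
            sameBin ω.2 x' ω.1 ∧
            (∏ i, p (ω.1 i)) ≤ (∏ i, p (x' i)) ∧
            ∃ i : Fin n, (i : ℕ) < n - Δ ∧ x' i ≠ ω.1 i)
        ≤ K * Real.exp (-(Δ : ℝ) * EML p R) :=
  statement0_general p hp m hm R hR hRH
end
end

section
/- For every n ≥ 1 and every index l with 1 ≤ l ≤ n, the probability that there exists a string x̃ ∈ X^n lying in the same bin as the source string x^n, agreeing with x^n in the first l−1 positions, satisfying x̃_l ≠ x_l and Ĥ(x̃_l^n) ≤ Ĥ(x_l^n), is at most (n−l+2)^{2|X|}·exp(−(n−l+1)·E_UN(R)). -/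
/-!
Condition on the source string `x` and let `k = n - l + 1`. A string that first differs from `x`
at position `l` has a prefix different from that of `x` at each of the last `k` positions, so the
independent uniform bin functions put it into the bin of `x` with probability `m⁻ᵏ = e^{-kR}`.
Such strings are determined by their suffix of length `k`, and by the method of types at most
`(k+1)^|X| e^{kh}` strings of length `k` have empirical entropy at most `h`. A union bound, capped
at `1`, bounds the conditional error probability by `(k+1)^|X| exp(-k |R - Ĥ(x_l^n)|⁺)`. This
depends only on the i.i.d. suffix `x_l^n`; averaging it over each type class `T_q`, which has
probability at most `exp(-k D(q‖p))`, and summing over the at most `(k+1)^|X|` type classes gives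
`(k+1)^|X| exp(-k E_UN(R))`.
-/

open Classical
open scoped BigOperators

noncomputable section

/-- Absolute continuity of `q` with respect to `p`. -/
def AbsCont {Z : Type*} (q p : Z → ℝ) : Prop := ∀ z, p z = 0 → q z = 0

/-- Kullback–Leibler divergence in nats (real-valued formula; it agrees with the usual
extended-valued divergence whenever `AbsCont q p` holds, and the extended-valued
divergence is `+∞` otherwise, so infima of `D(q‖p) + …` over all pmfs `q` coincide
with infima of this real-valued quantity over absolutely continuous pmfs `q`). -/
def klDiv {Z : Type*} [Fintype Z] (q p : Z → ℝ) : ℝ :=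
  ∑ z, q z * Real.log (q z / p z)

/-- `E_UN(R) = inf_q [D(q‖p) + |R − H(q)|⁺]`, the infimum over pmfs `q` (equivalently,
over absolutely continuous pmfs `q`, since otherwise `D(q‖p) = +∞`). -/
def EUN {X : Type*} [Fintype X] (p : X → ℝ) (R : ℝ) : ℝ :=
  sInf ((fun q : X → ℝ => klDiv q p + max (R - entropy q) 0) ''
    {q | IsPMF q ∧ AbsCont q p})

/-- The type (empirical distribution) of a string. -/
def typeOf {X : Type*} [Fintype X] [DecidableEq X] {k : ℕ} (w : Fin k → X) : X → ℝ :=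
  fun a => ((Finset.univ.filter fun i => w i = a).card : ℝ) / (k : ℝ)

/-- Empirical entropy: the entropy of the type of `w`. -/
def empEntropy {X : Type*} [Fintype X] [DecidableEq X] {k : ℕ} (w : Fin k → X) : ℝ :=
  entropy (typeOf w)

/-- The substring `w_a^b` (1-indexed, inclusive endpoints). -/
def substr {X : Type*} {n : ℕ} (w : Fin n → X) (a b : ℕ) (h : 1 ≤ a ∧ b ≤ n) :
    Fin (b + 1 - a) → X :=
  fun i => w ⟨a - 1 + i.val, by have := i.isLt; omega⟩

/-- `w` agrees with `x` in the first `l-1` positions and, when `l ≤ n`, differs from `x`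
at (1-indexed) position `l`.  When `l = n+1` this says `w = x`. -/
def divergesAt {X : Type*} {n : ℕ} (w x : Fin n → X) (l : ℕ) (hl : 1 ≤ l) : Prop :=
  (∀ i : Fin n, (i : ℕ) + 1 < l → w i = x i) ∧
    ∀ h : l ≤ n, w ⟨l - 1, by omega⟩ ≠ x ⟨l - 1, by omega⟩

open Finset Real

section Divergence

variable {Z : Type*} [Fintype Z]

lemma klDiv_self (q : Z → ℝ) : klDiv q q = 0 := by
  refine sum_eq_zero fun z _ => ?_
  by_cases hz : q z = 0 <;> simp [hz]

lemma klDiv_nonneg {q p : Z → ℝ} (hq : IsPMF q) (hp : IsPMF p) (hac : AbsCont q p) :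
    0 ≤ klDiv q p := by
  have hterm : ∀ z, q z - p z ≤ q z * log (q z / p z) := by
    intro z
    rcases (hq.1 z).eq_or_lt with hqz | hqz
    · simpa [← hqz] using hp.1 z
    · have hpz : 0 < p z := (hp.1 z).lt_of_ne' fun h => hqz.ne' (hac z h)
      calc q z - p z = q z * (1 - (q z / p z)⁻¹) := by field_simp
        _ ≤ q z * log (q z / p z) :=
          mul_le_mul_of_nonneg_left (one_sub_inv_le_log_of_pos (by positivity)) hqz.le
  have := sum_le_sum fun z (_ : z ∈ univ) => hterm z
  rwa [sum_sub_distrib, hq.2, hp.2, sub_self] at this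

lemma EUN_le {p q : Z → ℝ} (hp : IsPMF p) (hq : IsPMF q) (hac : AbsCont q p) (R : ℝ) :
    EUN p R ≤ klDiv q p + max (R - entropy q) 0 := by
  refine csInf_le ⟨0, ?_⟩ ⟨q, ⟨hq, hac⟩, rfl⟩
  rintro _ ⟨q', ⟨hq', hac'⟩, rfl⟩
  exact add_nonneg (klDiv_nonneg hq' hp hac') (le_max_right _ _)

end Divergence

section IIDProduct

variable {X : Type*} [Fintype X] {p : X → ℝ}

lemma sum_prod_eq_one {ι : Type*} [Fintype ι] [DecidableEq ι] (hp : ∑ a, p a = 1) :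
    ∑ w : ι → X, ∏ i, p (w i) = 1 := by
  rw [← Fintype.piFinset_univ, ← prod_univ_sum]
  simp [hp]

lemma sum_prod_mul_comp_inr {κ μ : Type*} [Fintype κ] [Fintype μ] [DecidableEq κ]
    [DecidableEq μ] (hp : ∑ a, p a = 1) (g : (μ → X) → ℝ) :
    ∑ x : κ ⊕ μ → X, (∏ s, p (x s)) * g (x ∘ Sum.inr)
      = ∑ w : μ → X, (∏ j, p (w j)) * g w := by
  rw [← (Equiv.sumArrowEquivProdArrow κ μ X).symm.sum_comp, Fintype.sum_prod_type]
  have hinr : ∀ u v, (Equiv.sumArrowEquivProdArrow κ μ X).symm (u, v) ∘ Sum.inr = v :=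
    fun _ _ => rfl
  simp only [Fintype.prod_sum_type, Equiv.sumArrowEquivProdArrow_symm_apply_inl,
    Equiv.sumArrowEquivProdArrow_symm_apply_inr, hinr]
  simp_rw [mul_assoc, ← mul_sum, ← sum_mul, sum_prod_eq_one hp, one_mul]

lemma sum_prod_mul_comp_of_injective {ι μ : Type*} [Fintype ι] [Fintype μ] [DecidableEq ι]
    [DecidableEq μ] {f : μ → ι} (hf : Function.Injective f) (hp : ∑ a, p a = 1)
    (g : (μ → X) → ℝ) :
    ∑ x : ι → X, (∏ i, p (x i)) * g (x ∘ f)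
      = ∑ w : μ → X, (∏ j, p (w j)) * g w := by
  let e : {i // i ∉ Set.range f} ⊕ μ ≃ ι :=
    ((Equiv.sumComm _ _).trans ((Equiv.ofInjective f hf).sumCongr (Equiv.refl _))).trans
      (Equiv.sumCompl _)
  have he : ∀ j, e.symm (f j) = Sum.inr j := fun j => e.symm_apply_eq.2 rfl
  rw [← sum_prod_mul_comp_inr (κ := {i // i ∉ Set.range f}) hp g,
    ← Equiv.sum_comp (e.arrowCongr (Equiv.refl X) :
      ({i // i ∉ Set.range f} ⊕ μ → X) ≃ (ι → X))]
  refine sum_congr rfl fun x _ => ?_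
  congr 1
  · exact e.symm.prod_comp fun s => p (x s)
  · congr 1
    funext j
    simp [Equiv.arrowCongr_apply, he]

end IIDProduct

section EmpiricalTypes

variable {X : Type*} [DecidableEq X] {k : ℕ}

def symbolCount (w : Fin k → X) (a : X) : ℕ := #{i | w i = a}

lemma symbolCount_le (w : Fin k → X) (a : X) : symbolCount w a ≤ k :=
  (card_filter_le _ _).trans_eq (card_fin k)

lemma prod_comp_eq_prod_pow_symbolCount [Fintype X] {M : Type*} [CommMonoid M] (w : Fin k → X)
    (f : X → M) : ∏ i, f (w i) = ∏ a, f a ^ symbolCount w a := by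
  rw [← prod_fiberwise univ w]
  refine prod_congr rfl fun a _ => ?_
  rw [prod_congr rfl fun i hi => by rw [(mem_filter.1 hi).2], prod_const]
  rfl

variable [Fintype X]

lemma typeOf_eq_symbolCount_div (w : Fin k → X) (a : X) :
    typeOf w a = symbolCount w a / k := rfl

lemma sum_symbolCount (w : Fin k → X) : ∑ a, symbolCount w a = k :=
  (card_eq_sum_card_fiberwise fun i _ => mem_univ (w i)).symm.trans (card_fin k)

lemma cast_symbolCount (w : Fin k → X) (a : X) : (symbolCount w a : ℝ) = k * typeOf w a := by
  rcases k.eq_zero_or_pos with rfl | hk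
  · simp [symbolCount]
  · rw [typeOf_eq_symbolCount_div]
    field_simp

lemma typeOf_nonneg (w : Fin k → X) (a : X) : 0 ≤ typeOf w a := by
  rw [typeOf_eq_symbolCount_div]
  positivity

lemma isPMF_typeOf (hk : 0 < k) (w : Fin k → X) : IsPMF (typeOf w) := by
  refine ⟨typeOf_nonneg w, ?_⟩
  simp only [typeOf_eq_symbolCount_div, ← sum_div, ← Nat.cast_sum, sum_symbolCount]
  field_simp

lemma empEntropy_nonneg (w : Fin k → X) : 0 ≤ empEntropy w := by
  rw [empEntropy, entropy, ← sum_neg_distrib]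
  refine sum_nonneg fun a _ => ?_
  rw [← neg_mul]
  refine negMulLog_nonneg (typeOf_nonneg w a) ?_
  rw [typeOf_eq_symbolCount_div]
  exact div_le_one_of_le₀ (by exact_mod_cast symbolCount_le w a) (Nat.cast_nonneg k)

lemma prod_eq_exp_neg_empEntropy_add_klDiv {q : X → ℝ} (hq : ∀ a, 0 ≤ q a)
    (w : Fin k → X) (hac : AbsCont (typeOf w) q) :
    ∏ i, q (w i) = exp (-(k * (empEntropy w + klDiv (typeOf w) q))) := by
  have hfactor : ∀ a, q a ^ symbolCount w a =
      exp (k * (typeOf w a * log (typeOf w a) - typeOf w a * log (typeOf w a / q a))) := by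
    intro a
    by_cases ht : typeOf w a = 0
    · have hN : (symbolCount w a : ℝ) = 0 := by rw [cast_symbolCount, ht, mul_zero]
      simp [ht, Nat.cast_eq_zero.1 hN]
    · have hqa : 0 < q a := (hq a).lt_of_ne' fun h => ht (hac a h)
      rw [log_div ht hqa.ne', ← mul_sub, sub_sub_cancel, ← mul_assoc, ← cast_symbolCount,
        exp_nat_mul, exp_log hqa]
  rw [prod_comp_eq_prod_pow_symbolCount, prod_congr rfl fun a _ => hfactor a, ← exp_sum,
    ← mul_sum, sum_sub_distrib, empEntropy, entropy, klDiv]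
  ring_nf

lemma prod_eq_zero_of_not_absCont {p : X → ℝ} {w : Fin k → X} (hac : ¬AbsCont (typeOf w) p) :
    ∏ i, p (w i) = 0 := by
  simp only [AbsCont, not_forall] at hac
  obtain ⟨a, hpa, hta⟩ := hac
  obtain ⟨i, hi⟩ : ∃ i, w i = a := by
    by_contra! h
    exact hta (by simp [typeOf, h])
  exact prod_eq_zero (mem_univ i) (by rw [hi, hpa])

lemma card_typeClass_le (hk : 0 < k) (w : Fin k → X) :
    (#{w' : Fin k → X | typeOf w' = typeOf w} : ℝ) ≤ exp (k * empEntropy w) := by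
  have hterm : ∀ w' ∈ ({w' | typeOf w' = typeOf w} : Finset (Fin k → X)),
      ∏ i, typeOf w (w' i) = exp (-(k * empEntropy w)) := by
    intro w' hw'
    have htype := (mem_filter.1 hw').2
    rw [← htype, prod_eq_exp_neg_empEntropy_add_klDiv (typeOf_nonneg w') w' fun _ => id,
      klDiv_self, add_zero, empEntropy, empEntropy, htype]
  have hsum : ∑ w' ∈ ({w' | typeOf w' = typeOf w} : Finset (Fin k → X)),
      ∏ i, typeOf w (w' i) ≤ 1 :=
    (sum_le_univ_sum_of_nonneg fun w' => prod_nonneg fun i _ => typeOf_nonneg w (w' i)).trans_eq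
      (sum_prod_eq_one (isPMF_typeOf hk w).2)
  rw [sum_congr rfl hterm, sum_const, nsmul_eq_mul, ← le_div_iff₀ (exp_pos _), one_div,
    ← exp_neg, neg_neg] at hsum
  exact hsum

lemma sum_typeClass_prod_le (hk : 0 < k) {p : X → ℝ} (hp : ∀ a, 0 ≤ p a) (w : Fin k → X)
    (hac : AbsCont (typeOf w) p) :
    ∑ w' ∈ ({w' | typeOf w' = typeOf w} : Finset (Fin k → X)), ∏ i, p (w' i)
      ≤ exp (-(k * klDiv (typeOf w) p)) := by
  have hterm : ∀ w' ∈ ({w' | typeOf w' = typeOf w} : Finset (Fin k → X)),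
      ∏ i, p (w' i) = exp (-(k * (empEntropy w + klDiv (typeOf w) p))) := by
    intro w' hw'
    have htype := (mem_filter.1 hw').2
    rw [prod_eq_exp_neg_empEntropy_add_klDiv hp w' (htype ▸ hac), empEntropy, empEntropy, htype]
  rw [sum_congr rfl hterm, sum_const, nsmul_eq_mul]
  calc _ ≤ exp (k * empEntropy w) * exp (-(k * (empEntropy w + klDiv (typeOf w) p))) :=
        mul_le_mul_of_nonneg_right (card_typeClass_le hk w) (exp_pos _).le
    _ = exp (-(k * klDiv (typeOf w) p)) := by rw [← exp_add]; ring_nf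

lemma card_image_typeOf_le (s : Finset (Fin k → X)) :
    #(s.image typeOf) ≤ (k + 1) ^ Fintype.card X := by
  have himage : s.image typeOf =
      (s.image fun w a => symbolCount w a).image fun N a => (N a : ℝ) / k := by
    rw [image_image]
    rfl
  rw [himage]
  refine card_image_le.trans <| (card_le_card ?_).trans_eq
    (by simp : #(Fintype.piFinset fun _ : X => range (k + 1)) = (k + 1) ^ Fintype.card X)
  intro N hN
  obtain ⟨w, -, rfl⟩ := mem_image.1 hN
  simpa [Fintype.mem_piFinset, Nat.lt_succ_iff] using symbolCount_le w

lemma sum_le_of_sum_typeClass_le (s : Finset (Fin k → X)) (f : (Fin k → X) → ℝ) {c : ℝ}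
    (hc : 0 ≤ c) (hclass : ∀ w ∈ s, ∑ w' ∈ s with typeOf w' = typeOf w, f w' ≤ c) :
    ∑ w ∈ s, f w ≤ (k + 1) ^ Fintype.card X * c := by
  rw [← sum_fiberwise_of_maps_to fun w hw => mem_image_of_mem typeOf hw]
  calc _ ≤ ∑ _t ∈ s.image typeOf, c := sum_le_sum fun t ht => by
        obtain ⟨w, hw, rfl⟩ := mem_image.1 ht
        exact hclass w hw
    _ = #(s.image typeOf) * c := by rw [sum_const, nsmul_eq_mul]
    _ ≤ (k + 1) ^ Fintype.card X * c := by
        gcongr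
        exact_mod_cast card_image_typeOf_le s

lemma card_filter_empEntropy_le (hk : 0 < k) (h : ℝ) :
    (#{w : Fin k → X | empEntropy w ≤ h} : ℝ) ≤ (k + 1) ^ Fintype.card X * exp (k * h) := by
  rw [cast_card]
  refine sum_le_of_sum_typeClass_le _ _ (exp_pos _).le fun w hw => ?_
  rw [← cast_card, filter_filter]
  calc _ ≤ (#{w' : Fin k → X | typeOf w' = typeOf w} : ℝ) := by
        exact_mod_cast card_le_card (monotone_filter_right _ fun _ _ (h : _ ∧ _) => h.2)
    _ ≤ exp (k * empEntropy w) := card_typeClass_le hk w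
    _ ≤ exp (k * h) := by
        gcongr
        exact (mem_filter.1 hw).2

lemma sum_prod_mul_exp_le (hk : 0 < k) {p : X → ℝ} (hp : IsPMF p) (R : ℝ) :
    ∑ w : Fin k → X, (∏ i, p (w i)) * exp (-(k * max (R - empEntropy w) 0))
      ≤ (k + 1) ^ Fintype.card X * exp (-(k * EUN p R)) := by
  refine sum_le_of_sum_typeClass_le _ _ (exp_pos _).le fun w _ => ?_
  have hentropy : ∀ w' ∈ ({w' | typeOf w' = typeOf w} : Finset (Fin k → X)),
      (∏ i, p (w' i)) * exp (-(k * max (R - empEntropy w') 0))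
        = (∏ i, p (w' i)) * exp (-(k * max (R - empEntropy w) 0)) := by
    intro w' hw'
    rw [empEntropy, empEntropy, (mem_filter.1 hw').2]
  rw [sum_congr rfl hentropy, ← sum_mul]
  by_cases hac : AbsCont (typeOf w) p
  · calc _ ≤ exp (-(k * klDiv (typeOf w) p)) * exp (-(k * max (R - empEntropy w) 0)) := by
          gcongr
          exact sum_typeClass_prod_le hk hp.1 w hac
      _ = exp (-(k * (klDiv (typeOf w) p + max (R - empEntropy w) 0))) := by
          rw [← exp_add]; ring_nf
      _ ≤ exp (-(k * EUN p R)) := by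
          gcongr
          exact EUN_le hp (isPMF_typeOf hk w) hac R
  · rw [sum_eq_zero fun w' hw' => prod_eq_zero_of_not_absCont ((mem_filter.1 hw').2 ▸ hac),
      zero_mul]
    exact (exp_pos _).le

end EmpiricalTypes

section Binning

lemma card_filter_apply_eq_apply_mul_card {F M : Type*} [Fintype F] [DecidableEq F] [Fintype M]
    [DecidableEq M] {u v : F} (huv : u ≠ v) :
    #{f : F → M | f u = f v} * Fintype.card M = Fintype.card (F → M) := by
  let e : {f : F → M // f u = f v} × M ≃ (F → M) :=
    { toFun := fun fc => Function.update fc.1.1 u fc.2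
      invFun := fun g => (⟨Function.update g u (g v), by simp [huv.symm]⟩, g u)
      left_inv := by
        rintro ⟨⟨f, hf⟩, c⟩
        simp [huv.symm, ← hf]
      right_inv := fun g => by simp }
  rw [← Fintype.card_congr e, Fintype.card_prod, Fintype.card_subtype]

variable {X : Type*} {n m : ℕ}

lemma card_sameBin_mul_pow_le [Fintype X] [DecidableEq X] (w x : Fin n → X) (J : Finset (Fin n))
    (hJ : ∀ j ∈ J, pref w j ≠ pref x j) :
    #{b : BinScheme X n m | sameBin b w x} * m ^ #J ≤ Fintype.card (BinScheme X n m) := by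
  have hfilter : ({b | sameBin b w x} : Finset (BinScheme X n m)) =
      Fintype.piFinset fun j => {f | f (pref w j) = f (pref x j)} := by
    ext b
    rw [mem_filter, Fintype.mem_piFinset]
    simp only [mem_filter, mem_univ, true_and, sameBin]
  have hpow : m ^ #J = ∏ j, if j ∈ J then m else 1 := by
    rw [prod_ite_mem, univ_inter, prod_const]
  rw [hfilter, Fintype.card_piFinset, Fintype.card_pi, hpow, ← prod_mul_distrib]
  refine prod_le_prod' fun j _ => ?_
  split_ifs with hj
  · have hcard := card_filter_apply_eq_apply_mul_card (M := Fin m) (hJ j hj)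
    rw [Fintype.card_fin] at hcard
    exact hcard.le
  · rw [mul_one]
    exact card_le_univ _

lemma card_exists_sameBin_mul_pow_le [Fintype X] [DecidableEq X] (x : Fin n → X)
    (P : (Fin n → X) → Prop) [DecidablePred P] (J : Finset (Fin n))
    (hJ : ∀ w, P w → ∀ j ∈ J, pref w j ≠ pref x j) :
    #{b : BinScheme X n m | ∃ w, sameBin b w x ∧ P w} * m ^ #J
      ≤ #{w | P w} * Fintype.card (BinScheme X n m) := by
  have hunion : ({b | ∃ w, sameBin b w x ∧ P w} : Finset (BinScheme X n m)) ⊆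
      ({w | P w} : Finset (Fin n → X)).biUnion fun w => {b | sameBin b w x} := by
    intro b hb
    obtain ⟨w, hb, hw⟩ := (mem_filter.1 hb).2
    simpa using ⟨w, hw, hb⟩
  calc _ ≤ (∑ w ∈ ({w | P w} : Finset (Fin n → X)), #{b : BinScheme X n m | sameBin b w x})
          * m ^ #J := by
        gcongr
        exact (card_le_card hunion).trans card_biUnion_le
    _ = ∑ w ∈ ({w | P w} : Finset (Fin n → X)),
          #{b : BinScheme X n m | sameBin b w x} * m ^ #J := sum_mul _ _ _
    _ ≤ ∑ _w ∈ ({w | P w} : Finset (Fin n → X)), Fintype.card (BinScheme X n m) :=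
        sum_le_sum fun w hw => card_sameBin_mul_pow_le w x J (hJ w (mem_filter.1 hw).2)
    _ = _ := by rw [sum_const, smul_eq_mul]

variable {l : ℕ}

lemma pref_ne_of_divergesAt {hl1 : 1 ≤ l} {w x : Fin n → X} (hl2 : l ≤ n)
    (h : divergesAt w x l hl1) {j : Fin n} (hj : l - 1 ≤ j) : pref w j ≠ pref x j :=
  fun heq => h.2 hl2 (congrFun heq ⟨l - 1, by omega⟩)

lemma injOn_substr (hl1 : 1 ≤ l) (x : Fin n → X) :
    Set.InjOn (fun w : Fin n → X => substr w l n ⟨hl1, le_rfl⟩)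
      {w | ∀ i : Fin n, (i : ℕ) + 1 < l → w i = x i} := by
  intro w₁ h₁ w₂ h₂ heq
  funext i
  by_cases hi : (i : ℕ) + 1 < l
  · rw [h₁ i hi, h₂ i hi]
  · have := congrFun heq ⟨i - (l - 1), by omega⟩
    simp only [substr] at this
    convert this using 2 <;> ext <;> simp <;> omega

lemma card_divergesAt_empEntropy_le [Fintype X] [DecidableEq X] (hl1 : 1 ≤ l) (x : Fin n → X)
    (h : ℝ) :
    #{w | divergesAt w x l hl1 ∧ empEntropy (substr w l n ⟨hl1, le_rfl⟩) ≤ h}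
      ≤ #{v : Fin (n + 1 - l) → X | empEntropy v ≤ h} :=
  card_le_card_of_injOn _ (fun _ hw => mem_filter.2 ⟨mem_univ _, (mem_filter.1 hw).2.2⟩)
    ((injOn_substr hl1 x).mono fun _ hw => (mem_filter.1 hw).2.1.1)

lemma card_exists_sameBin_div_card_le [Fintype X] [DecidableEq X] (hm : 0 < m) (x : Fin n → X)
    (P : (Fin n → X) → Prop) [DecidablePred P] (J : Finset (Fin n))
    (hJ : ∀ w, P w → ∀ j ∈ J, pref w j ≠ pref x j) :
    (#{b : BinScheme X n m | ∃ w, sameBin b w x ∧ P w} : ℝ) / Fintype.card (BinScheme X n m)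
      ≤ #{w | P w} / (m : ℝ) ^ #J := by
  have : NeZero m := ⟨hm.ne'⟩
  have hB : (0 : ℝ) < Fintype.card (BinScheme X n m) := Nat.cast_pos.2 Fintype.card_pos
  have hunion := Nat.cast_le (α := ℝ).2 (card_exists_sameBin_mul_pow_le (m := m) x P J hJ)
  rw [Nat.cast_mul, Nat.cast_mul, Nat.cast_pow] at hunion
  rw [div_le_div_iff₀ hB (by positivity)]
  exact hunion

lemma card_misleadingBins_div_card_le [Fintype X] [DecidableEq X] (x : Fin n → X) (hl1 : 1 ≤ l)
    (hl2 : l ≤ n) {h : ℝ} (hh : 0 ≤ h) :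
    (#{b : BinScheme X n m | ∃ w, sameBin b w x ∧ divergesAt w x l hl1 ∧
        empEntropy (substr w l n ⟨hl1, le_rfl⟩) ≤ h} : ℝ) / Fintype.card (BinScheme X n m)
      ≤ (((n + 1 - l : ℕ) : ℝ) + 1) ^ Fintype.card X *
          exp (-((n + 1 - l : ℕ) * max (log m - h) 0)) := by
  rcases le_or_gt (log m) h with hlog | hlog
  · rw [max_eq_right (sub_nonpos.2 hlog), mul_zero, neg_zero, exp_zero, mul_one]
    refine (div_le_one_of_le₀ (by exact_mod_cast card_le_univ _) (Nat.cast_nonneg _)).trans ?_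
    exact one_le_pow₀ (by linarith [(Nat.cast_nonneg (n + 1 - l) : (0 : ℝ) ≤ _)])
  -- `log 0 = 0`, so `h < log m` rules out `m = 0`
  have hm : 0 < m := Nat.pos_of_ne_zero fun hm => by simp [hm] at hlog; linarith
  have hfrac := card_exists_sameBin_div_card_le hm x
    (fun w => divergesAt w x l hl1 ∧ empEntropy (substr w l n ⟨hl1, le_rfl⟩) ≤ h)
    (Ici (⟨l - 1, by omega⟩ : Fin n)) fun w hw j hj =>
      pref_ne_of_divergesAt hl2 hw.1 (Fin.le_def.1 (Finset.mem_Ici.1 hj))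
  rw [Fin.card_Ici, show n - (l - 1) = n + 1 - l by omega] at hfrac
  have hmk : (m : ℝ) ^ (n + 1 - l) = exp ((n + 1 - l : ℕ) * log m) := by
    rw [exp_nat_mul, exp_log (by exact_mod_cast hm)]
  have hcard := (Nat.cast_le (α := ℝ).2 (card_divergesAt_empEntropy_le hl1 x h)).trans
    (card_filter_empEntropy_le (by omega) h)
  refine hfrac.trans ?_
  rw [hmk, max_eq_left (sub_pos.2 hlog).le, div_le_iff₀ (exp_pos _), mul_assoc, ← exp_add]
  convert hcard using 3
  ring

end Binning

lemma prob_fst_div_card_eq_sum {α β : Type*} [Fintype α] [Fintype β] (f : α → ℝ)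
    (A : α × β → Prop) [DecidablePred A] :
    prob (fun ω => f ω.1 / Fintype.card β) A
      = ∑ a, f a * ((#{b | A (a, b)} : ℝ) / Fintype.card β) := by
  rw [prob, Fintype.sum_prod_type]
  refine sum_congr rfl fun a _ => ?_
  simp only [sum_ite, sum_const_zero, add_zero, sum_const, nsmul_eq_mul]
  ring

theorem statement3_general {X : Type*} [Fintype X] [DecidableEq X]
    (p : X → ℝ) (hp : IsPMF p)
    (m : ℕ) (R : ℝ) (hR : R = Real.log m)
    (n : ℕ) (l : ℕ) (hl1 : 1 ≤ l) (hl2 : l ≤ n) :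
    prob
      (fun ω : (Fin n → X) × BinScheme X n m =>
        (∏ i, p (ω.1 i)) / (Fintype.card (BinScheme X n m) : ℝ))
      (fun ω => ∃ x' : Fin n → X,
        sameBin ω.2 x' ω.1 ∧ divergesAt x' ω.1 l hl1 ∧
        empEntropy (substr x' l n ⟨hl1, le_rfl⟩) ≤
          empEntropy (substr ω.1 l n ⟨hl1, le_rfl⟩))
    ≤ ((n : ℝ) - l + 2) ^ (2 * Fintype.card X) *
        Real.exp (-((n : ℝ) - l + 1) * EUN p R) := by
  subst hR
  set k := n + 1 - l with hk_def
  have hk : (k : ℝ) = n - l + 1 := by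
    rw [hk_def, Nat.cast_sub (by omega)]
    push_cast
    ring
  have hsuffix : Function.Injective fun i : Fin k => (⟨l - 1 + i, by omega⟩ : Fin n) :=
    fun i j hij => Fin.ext (by simpa using congrArg Fin.val hij)
  rw [prob_fst_div_card_eq_sum fun x : Fin n → X => ∏ i, p (x i)]
  calc _ ≤ ∑ x : Fin n → X, (∏ i, p (x i)) * (((k : ℝ) + 1) ^ Fintype.card X *
          exp (-(k * max (log m - empEntropy (substr x l n ⟨hl1, le_rfl⟩)) 0))) :=
        sum_le_sum fun x _ => mul_le_mul_of_nonneg_left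
          (card_misleadingBins_div_card_le x hl1 hl2 (empEntropy_nonneg _))
          (prod_nonneg fun i _ => hp.1 _)
    _ = ((k : ℝ) + 1) ^ Fintype.card X *
          ∑ w : Fin k → X, (∏ i, p (w i)) * exp (-(k * max (log m - empEntropy w) 0)) := by
        rw [← sum_prod_mul_comp_of_injective hsuffix hp.2, mul_sum]
        exact sum_congr rfl fun x _ => mul_left_comm _ _ _
    _ ≤ ((k : ℝ) + 1) ^ Fintype.card X *
          (((k : ℝ) + 1) ^ Fintype.card X * exp (-(k * EUN p (log m)))) := by
        gcongr
        exact sum_prod_mul_exp_le (by omega) hp _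
    _ = _ := by
        rw [hk]
        ring_nf

/-- Lemma 2: with minimum suffix-entropy decoding, the probability of a misleading string
first diverging at position `l` is at most `(n−l+2)^{2|X|} exp(−(n−l+1) E_UN(R))`. -/
theorem statement3 {X : Type*} [Fintype X] [DecidableEq X] [Nonempty X]
    (p : X → ℝ) (hp : IsPMF p)
    (m : ℕ) (hm : 2 ≤ m) (R : ℝ) (hR : R = Real.log m)
    (n : ℕ) (hn : 1 ≤ n) (l : ℕ) (hl1 : 1 ≤ l) (hl2 : l ≤ n) :
    prob
      (fun ω : (Fin n → X) × BinScheme X n m =>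
        (∏ i, p (ω.1 i)) / (Fintype.card (BinScheme X n m) : ℝ))
      (fun ω => ∃ x' : Fin n → X,
        sameBin ω.2 x' ω.1 ∧ divergesAt x' ω.1 l hl1 ∧
        empEntropy (substr x' l n ⟨hl1, le_rfl⟩) ≤
          empEntropy (substr ω.1 l n ⟨hl1, le_rfl⟩))
    ≤ ((n : ℝ) - l + 2) ^ (2 * Fintype.card X) *
        Real.exp (-((n : ℝ) - l + 1) * EUN p R) :=
  statement3_general p hp m R hR n l hl1 hl2
end
end

section
/- Suppose R = log m > H_p(x|y). Then there exists a constant K > 0 such that for every n ≥ 1 and every integer Δ with 0 ≤ Δ ≤ n−1, the probability that there exists a string x̃ ∈ X^n lying in the same bin as the source string x^n, differing from x^n in at least one of the first n−Δ positions, and satisfying p(x̃, y^n) ≥ p(x^n, y^n), is at most K·exp(−Δ·E_{ML,SI}(R)), where E_{ML,SI}(R) = sup_{ρ∈[0,1]} [ρR − log Σ_{y∈Y} (Σ_{x∈X} p(x,y)^{1/(1+ρ)})^{1+ρ}]. -/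
open Classical
open scoped BigOperators

noncomputable section

/-- Marginal on the second coordinate. -/
def margY {X Y : Type*} [Fintype X] (q : X × Y → ℝ) : Y → ℝ := fun y => ∑ x, q (x, y)

/-- Marginal on the first coordinate. -/
def margX {X Y : Type*} [Fintype Y] (q : X × Y → ℝ) : X → ℝ := fun x => ∑ y, q (x, y)

/-- Conditional entropy `H_q(x|y) = H(q) − H(q_Y)` of the first coordinate given the
second, under the joint pmf `q`. -/
def condEntXY {X Y : Type*} [Fintype X] [Fintype Y] (q : X × Y → ℝ) : ℝ :=
  entropy q - entropy (margY q)

/-- Conditional entropy `H_q(y|x) = H(q) − H(q_X)` of the second coordinate given the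
first, under the joint pmf `q`. -/
def condEntYX {X Y : Type*} [Fintype X] [Fintype Y] (q : X × Y → ℝ) : ℝ :=
  entropy q - entropy (margX q)

/-- `E_{ML,SI}(R) = sup_{ρ ∈ [0,1]} [ρR − log Σ_y (Σ_x p(x,y)^{1/(1+ρ)})^{1+ρ}]`. -/
def EMLSI {X Y : Type*} [Fintype X] [Fintype Y] (p : X × Y → ℝ) (R : ℝ) : ℝ :=
  sSup ((fun ρ : ℝ =>
    ρ * R - Real.log (∑ y, (∑ x, p (x, y) ^ (1 / (1 + ρ))) ^ (1 + ρ))) '' Set.Icc 0 1)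

/-!
Gallager's random-binning argument, made causal. Fix the source `(x, y)`. A competitor `x'` that
first differs from `x` at position `t` has fresh, independent, uniform bin indices at positions
`t, …, n-1`, so it shares the bin of `x` with probability `m^{-(n-t)}`. Bound the conditional
error probability by `min 1 (union bound) ≤ (union bound)^ρ`, and weight every competitor at
least as likely as `x` by `(p(x',y)/p(x,y))^{1/(1+ρ)} ≥ 1`; the sum over competitors then
factorises letter by letter. Averaging over the source turns the bound into
`Σ_{t < n-Δ} (m^{-ρ} G(ρ))^{n-t}` with `G(ρ) = Σ_y (Σ_x p(x,y)^{1/(1+ρ)})^{1+ρ}`, a geometric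
series of ratio `exp(-(ρR - log G(ρ)))` dominated by its first term. Finally `E_{ML,SI}(R) > 0`:
`ρR - log G(ρ)` vanishes at `ρ = 0` with derivative `R - H(x|y) > 0`, and the supremum over the
compact `[0,1]` is attained.
-/

open Finset Real Filter Topology

namespace CausalBinning

section Prob

variable {Ω : Type*} [Fintype Ω] {P : Ω → ℝ}

lemma prob_mono (hP : ∀ ω, 0 ≤ P ω) {A B : Ω → Prop} (hAB : ∀ ω, A ω → B ω) :
    prob P A ≤ prob P B :=
  sum_le_sum fun ω _ => by
    by_cases hA : A ω
    · simp [hA, hAB ω hA]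
    · by_cases hB : B ω <;> simp [hA, hB, hP ω]

lemma prob_le_sum (hP : ∀ ω, 0 ≤ P ω) (A : Ω → Prop) : prob P A ≤ ∑ ω, P ω :=
  sum_le_sum fun ω _ => by split_ifs <;> simp [hP ω]

lemma prob_exists_le {ι : Type*} (hP : ∀ ω, 0 ≤ P ω) (s : Finset ι) (A : ι → Ω → Prop) :
    prob P (fun ω => ∃ i ∈ s, A i ω) ≤ ∑ i ∈ s, prob P (A i) := by
  classical
  induction s using Finset.induction_on with
  | empty => simp [prob]
  | insert i s hi ih =>
    rw [sum_insert hi]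
    calc prob P (fun ω => ∃ j ∈ insert i s, A j ω)
        ≤ prob P (A i) + prob P (fun ω => ∃ j ∈ s, A j ω) := by
          rw [prob, prob, prob, ← sum_add_distrib]
          refine sum_le_sum fun ω _ => ?_
          by_cases h₁ : A i ω <;> by_cases h₂ : ∃ j ∈ s, A j ω <;> simp [h₁, h₂, hP ω]
      _ ≤ _ := by gcongr

lemma prob_prod_div {β : Type*} [Fintype β] (P : Ω → ℝ) (c : ℝ) (A : Ω × β → Prop) :
    prob (fun ω : Ω × β => P ω.1 / c) A =
      ∑ a, P a * prob (fun _ : β => c⁻¹) (fun b => A (a, b)) := by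
  simp only [prob, Fintype.sum_prod_type, mul_sum]
  refine sum_congr rfl fun a _ => sum_congr rfl fun b _ => ?_
  split_ifs <;> simp [div_eq_mul_inv]

lemma prob_uniform_pi {ι : Type*} [Fintype ι] [DecidableEq ι] {β : ι → Type*}
    [∀ i, Fintype (β i)] (A : ∀ i, β i → Prop) :
    prob (fun _ : (∀ i, β i) => (Fintype.card (∀ i, β i) : ℝ)⁻¹) (fun b => ∀ i, A i (b i)) =
      ∏ i, prob (fun _ : β i => (Fintype.card (β i) : ℝ)⁻¹) (A i) := by
  simp only [prob, Fintype.prod_sum, Fintype.card_pi, Nat.cast_prod]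
  refine sum_congr rfl fun b _ => ?_
  rw [prod_ite_zero]
  simp

lemma prob_apply_eq_apply {A B : Type*} [Fintype A] [DecidableEq A] [Fintype B] {u v : A}
    (huv : u ≠ v) :
    prob (fun _ : A → B => (Fintype.card (A → B) : ℝ)⁻¹) (fun g => g u = g v) =
      (Fintype.card B : ℝ)⁻¹ := by
  let e : {g : A → B // g u = g v} ≃ ({a // a ≠ v} → B) :=
    { toFun g a := g.1 a
      invFun h := ⟨fun a => if ha : a = v then h ⟨u, huv⟩ else h ⟨a, ha⟩, by simp [huv]⟩
      left_inv := by
        rintro ⟨g, hg⟩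
        ext a
        by_cases ha : a = v
        · simp [ha, hg]
        · simp [ha]
      right_inv h := by
        ext a
        simp [a.2] }
  have hcard : (#{g : A → B | g u = g v} : ℝ) * Fintype.card B = Fintype.card (A → B) := by
    rw [← Fintype.card_subtype, Fintype.card_congr e]
    simp only [Fintype.card_fun, Fintype.card_subtype_compl, Fintype.card_subtype_eq]
    have : 1 ≤ Fintype.card A := Fintype.card_pos_iff.mpr ⟨u⟩
    rw [← Nat.cast_mul, ← pow_succ, Nat.sub_add_cancel this]
  rw [prob, ← sum_filter, sum_const, nsmul_eq_mul, ← hcard]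
  rcases isEmpty_or_nonempty B with hB | ⟨⟨c⟩⟩
  · simp
  · have : (#{g : A → B | g u = g v} : ℝ) ≠ 0 := by
      exact_mod_cast (card_pos.mpr ⟨fun _ => c, by simp⟩).ne'
    field_simp

end Prob

lemma rpow_sum_le_sum_rpow {ι : Type*} {s : Finset ι} (hs : s.Nonempty) {f : ι → ℝ}
    (hf : ∀ i ∈ s, 0 ≤ f i) {ρ : ℝ} (h0 : 0 ≤ ρ) (h1 : ρ ≤ 1) :
    (∑ i ∈ s, f i) ^ ρ ≤ ∑ i ∈ s, f i ^ ρ := by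
  induction hs using Finset.Nonempty.cons_induction with
  | singleton i => simp
  | cons i s hi _ ih =>
    simp only [sum_cons, forall_mem_cons] at hf ⊢
    calc (f i + ∑ j ∈ s, f j) ^ ρ ≤ f i ^ ρ + (∑ j ∈ s, f j) ^ ρ :=
          rpow_add_le_add_rpow hf.1 (sum_nonneg hf.2) h0 h1
      _ ≤ f i ^ ρ + ∑ j ∈ s, f j ^ ρ := by gcongr; exact ih hf.2

lemma min_one_le_rpow {a ρ : ℝ} (ha : 0 ≤ a) (h0 : 0 ≤ ρ) (h1 : ρ ≤ 1) : min 1 a ≤ a ^ ρ := by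
  rcases le_total a 1 with ha1 | ha1
  · calc min 1 a ≤ a ^ (1 : ℝ) := by simp
      _ ≤ a ^ ρ := rpow_le_rpow_of_exponent_ge' ha ha1 h0 h1
  · exact (min_le_left _ _).trans (one_le_rpow ha1 h0)

lemma min_one_sum_le_sum_rpow {ι : Type*} {s : Finset ι} {f : ι → ℝ} (hf : ∀ i ∈ s, 0 ≤ f i)
    {ρ : ℝ} (h0 : 0 ≤ ρ) (h1 : ρ ≤ 1) : min 1 (∑ i ∈ s, f i) ≤ ∑ i ∈ s, f i ^ ρ := by
  rcases s.eq_empty_or_nonempty with rfl | hs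
  · simp
  · exact (min_one_le_rpow (sum_nonneg hf) h0 h1).trans (rpow_sum_le_sum_rpow hs hf h0 h1)

lemma sum_range_pow_sub_le {r : ℝ} (h0 : 0 ≤ r) (h1 : r < 1) {n Δ : ℕ} (hΔ : Δ ≤ n) :
    ∑ t ∈ range (n - Δ), r ^ (n - t) ≤ r ^ Δ / (1 - r) :=
  calc ∑ t ∈ range (n - Δ), r ^ (n - t) = ∑ k ∈ Ico (Δ + 1) (n + 1), r ^ k := by
        rw [range_eq_Ico, sum_Ico_reflect _ _ (by omega)]
        congr 2
        omega
    _ ≤ r ^ (Δ + 1) / (1 - r) := geom_sum_Ico_le_of_lt_one h0 h1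
    _ ≤ r ^ Δ / (1 - r) :=
        div_le_div_of_nonneg_right (pow_le_pow_of_le_one h0 h1.le Δ.le_succ) (by linarith)

lemma prod_ite_lt_eq_pow {M : Type*} [CommMonoid M] (n t : ℕ) (c : M) :
    ∏ j : Fin n, (if (j : ℕ) < t then 1 else c) = c ^ (n - t) := by
  rw [Fin.prod_univ_eq_prod_range (fun j => if j < t then 1 else c), prod_ite, prod_const_one,
    one_mul, prod_const]
  congr 1
  have : {j ∈ range n | ¬j < t} = Ico t n := by
    ext j
    simp only [mem_filter, mem_range, mem_Ico, not_lt]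
    omega
  rw [this, Nat.card_Ico]

section Binning

variable {X : Type*} {n m : ℕ}

lemma pref_eq_pref_iff {x' x : Fin n → X} {j : Fin n} :
    pref x' j = pref x j ↔ ∀ i : Fin n, i ≤ j → x' i = x i := by
  constructor
  · intro h i hij
    simpa [pref] using congrFun h ⟨i, Nat.lt_succ_of_le hij⟩
  · intro h
    funext i
    exact h _ (Nat.lt_succ_iff.mp i.isLt)

def FirstDiffAt (x' x : Fin n → X) (t : ℕ) : Prop :=
  (∀ i : Fin n, (i : ℕ) < t → x' i = x i) ∧ ∃ i : Fin n, (i : ℕ) = t ∧ x' i ≠ x i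

lemma exists_firstDiffAt_le {x' x : Fin n → X} {i : Fin n} (h : x' i ≠ x i) :
    ∃ t ≤ (i : ℕ), FirstDiffAt x' x t := by
  classical
  have hex : ∃ t, ∃ i : Fin n, (i : ℕ) = t ∧ x' i ≠ x i := ⟨i, i, rfl, h⟩
  refine ⟨Nat.find hex, Nat.find_min' hex ⟨i, rfl, h⟩, fun k hk => ?_, Nat.find_spec hex⟩
  by_contra hne
  exact Nat.find_min hex hk ⟨k, rfl, hne⟩

variable [Fintype X] [DecidableEq X]

lemma prob_sameBin (hm : m ≠ 0) (x' x : Fin n → X) :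
    prob (fun _ : BinScheme X n m => (Fintype.card (BinScheme X n m) : ℝ)⁻¹)
        (fun b => sameBin b x' x) =
      ∏ j, if pref x' j = pref x j then 1 else (m : ℝ)⁻¹ := by
  refine (prob_uniform_pi (β := fun j : Fin n => (Fin (j + 1) → X) → Fin m)
    fun j g => g (pref x' j) = g (pref x j)).trans (prod_congr rfl fun j _ => ?_)
  split_ifs with h
  · simp [prob, h, hm]
  · rw [prob_apply_eq_apply h, Fintype.card_fin]

lemma prob_sameBin_of_firstDiffAt (hm : m ≠ 0) {x' x : Fin n → X} {t : ℕ}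
    (h : FirstDiffAt x' x t) :
    prob (fun _ : BinScheme X n m => (Fintype.card (BinScheme X n m) : ℝ)⁻¹)
        (fun b => sameBin b x' x) = (m : ℝ)⁻¹ ^ (n - t) := by
  obtain ⟨hagree, k, rfl, hk⟩ := h
  rw [prob_sameBin hm, ← prod_ite_lt_eq_pow]
  refine prod_congr rfl fun j _ => ?_
  congr 1
  rw [pref_eq_pref_iff, eq_iff_iff]
  constructor
  · intro hj
    by_contra hkj
    exact hk (hj k (not_lt.mp hkj))
  · exact fun hj i hij => hagree i (lt_of_le_of_lt hij hj)

end Binning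

lemma exists_mem_Ioo_lt_of_hasDerivAt_pos {f : ℝ → ℝ} {f' a b : ℝ} (hf : HasDerivAt f f' a)
    (hf' : 0 < f') (hab : a < b) : ∃ x ∈ Set.Ioo a b, f a < f x := by
  have hslope : Tendsto (slope f a) (𝓝[>] a) (𝓝 f') :=
    (hasDerivAt_iff_tendsto_slope.mp hf).mono_left (nhdsGT_le_nhdsNE a)
  obtain ⟨x, hpos, hx⟩ :=
    ((hslope.eventually (lt_mem_nhds hf')).and (Ioo_mem_nhdsGT hab)).exists
  refine ⟨x, hx, ?_⟩
  rw [slope_def_field] at hpos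
  exact sub_pos.mp ((div_pos_iff_of_pos_right (sub_pos.mpr hx.1)).mp hpos)

section Gallager

variable {X Y : Type*} [Fintype X] [Fintype Y] {p : X × Y → ℝ}

def gallagerSum (p : X × Y → ℝ) (ρ : ℝ) : ℝ :=
  ∑ y, (∑ x, p (x, y) ^ (1 / (1 + ρ))) ^ (1 + ρ)

lemma gallagerSum_pos (hp : IsPMF p) (ρ : ℝ) : 0 < gallagerSum p ρ := by
  obtain ⟨⟨x, y⟩, -, hxy⟩ :=
    exists_lt_of_sum_lt (by simp [hp.2] : ∑ _z : X × Y, (0 : ℝ) < ∑ z, p z)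
  have hS : ∀ y, 0 ≤ ∑ x, p (x, y) ^ (1 / (1 + ρ)) :=
    fun y => sum_nonneg fun x _ => rpow_nonneg (hp.1 _) _
  refine sum_pos' (fun y _ => rpow_nonneg (hS y) _) ⟨y, mem_univ _, rpow_pos_of_pos ?_ _⟩
  exact sum_pos' (fun x _ => rpow_nonneg (hp.1 _) _) ⟨x, mem_univ _, rpow_pos_of_pos hxy _⟩

lemma continuousAt_gallagerSum {ρ : ℝ} (hρ : -1 < ρ) : ContinuousAt (gallagerSum p) ρ := by
  have h1ρ : 1 + ρ ≠ 0 := by linarith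
  refine tendsto_finsetSum _ fun y _ => ContinuousAt.rpow ?_ (by fun_prop) (Or.inr (by linarith))
  exact tendsto_finsetSum _ fun x _ =>
    ContinuousAt.rpow continuousAt_const (by fun_prop (disch := exact h1ρ))
      (Or.inr (one_div_pos.mpr (by linarith)))

lemma gallagerSum_zero (hp : IsPMF p) : gallagerSum p 0 = 1 := by
  simp only [gallagerSum, add_zero, div_one, rpow_one]
  rw [← hp.2, Fintype.sum_prod_type_right]

lemma hasDerivAt_rpow_one_div_one_add (a : ℝ) (ha : 0 ≤ a) :
    HasDerivAt (fun ρ : ℝ => a ^ (1 / (1 + ρ))) (-(a * log a)) 0 := by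
  rcases ha.eq_or_lt with rfl | ha
  · refine (hasDerivAt_const (0 : ℝ) (0 : ℝ)).congr_of_eventuallyEq ?_ |>.congr_deriv (by simp)
    filter_upwards [Ioi_mem_nhds (by norm_num : (-1 : ℝ) < 0)] with ρ hρ
    have : 1 + ρ ≠ 0 := by simp only [Set.mem_Ioi] at hρ; linarith
    simp [this]
  · have hinv : HasDerivAt (fun ρ : ℝ => 1 / (1 + ρ)) (-1) 0 := by
      simpa [one_div] using ((hasDerivAt_id (0 : ℝ)).const_add 1).fun_inv (by norm_num)
    convert hinv.const_rpow ha using 1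
    simp only [mul_neg, mul_one, add_zero, div_one, rpow_one, neg_mul, neg_inj]
    ring

lemma hasDerivAt_sum_rpow_one_div_one_add_rpow {a : X → ℝ} (ha : ∀ x, 0 ≤ a x) :
    HasDerivAt (fun ρ : ℝ => (∑ x, a x ^ (1 / (1 + ρ))) ^ (1 + ρ))
      ((∑ x, a x) * log (∑ x, a x) - ∑ x, a x * log (a x)) 0 := by
  have hS : HasDerivAt (fun ρ : ℝ => ∑ x, a x ^ (1 / (1 + ρ))) (-∑ x, a x * log (a x)) 0 := by
    simpa using HasDerivAt.fun_sum fun x _ => hasDerivAt_rpow_one_div_one_add (a x) (ha x)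
  rcases (sum_nonneg fun x _ => ha x : 0 ≤ ∑ x, a x).eq_or_lt with hzero | hpos
  · have ha0 : ∀ x, a x = 0 := fun x =>
      (sum_eq_zero_iff_of_nonneg fun x _ => ha x).mp hzero.symm x (mem_univ x)
    refine (hasDerivAt_const (0 : ℝ) (0 : ℝ)).congr_of_eventuallyEq ?_
      |>.congr_deriv (by simp [ha0])
    filter_upwards [Ioi_mem_nhds (by norm_num : (-1 : ℝ) < 0)] with ρ hρ
    have : 1 + ρ ≠ 0 := by simp only [Set.mem_Ioi] at hρ; linarith
    simp [ha0, this]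
  · refine (hS.rpow ((hasDerivAt_id' (0 : ℝ)).const_add 1) (by simpa using hpos)).congr_deriv ?_
    simp only [add_zero, mul_one, div_one, rpow_one, sub_self, rpow_zero, one_mul]
    ring

lemma hasDerivAt_gallagerSum_zero (hp : IsPMF p) :
    HasDerivAt (gallagerSum p) (condEntXY p) 0 := by
  refine (HasDerivAt.fun_sum (u := univ) fun y _ => hasDerivAt_sum_rpow_one_div_one_add_rpow
    (a := fun x => p (x, y)) fun x => hp.1 _).congr_deriv ?_
  simp only [condEntXY, entropy, margY, sum_sub_distrib, Fintype.sum_prod_type_right]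
  ring

lemma exists_EMLSI_eq_of_condEntXY_lt (hp : IsPMF p) {R : ℝ} (hR : condEntXY p < R) :
    ∃ ρ ∈ Set.Icc (0 : ℝ) 1, EMLSI p R = ρ * R - log (gallagerSum p ρ) ∧ 0 < EMLSI p R := by
  set f : ℝ → ℝ := fun ρ => ρ * R - log (gallagerSum p ρ)
  have hEMLSI : EMLSI p R = sSup (f '' Set.Icc 0 1) := rfl
  have hcont : ContinuousOn f (Set.Icc 0 1) := fun ρ hρ =>
    ((continuousAt_id.mul continuousAt_const).sub ((continuousAt_gallagerSum
      (by linarith [hρ.1])).log (gallagerSum_pos hp ρ).ne')).continuousWithinAt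
  have hderiv : HasDerivAt f (R - condEntXY p) 0 := by
    refine (((hasDerivAt_id' (0 : ℝ)).mul_const R).sub ((hasDerivAt_gallagerSum_zero hp).log
      (by simp [gallagerSum_zero hp]))).congr_deriv ?_
    simp [gallagerSum_zero hp]
  obtain ⟨ρ₁, hρ₁, hfρ₁⟩ := exists_mem_Ioo_lt_of_hasDerivAt_pos hderiv (sub_pos.mpr hR) zero_lt_one
  obtain ⟨ρ, hρ, hsup⟩ :=
    isCompact_Icc.exists_sSup_image_eq (Set.nonempty_Icc.mpr zero_le_one) hcont
  refine ⟨ρ, hρ, hEMLSI.trans hsup, ?_⟩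
  have hf0 : f 0 = 0 := by simp [f, gallagerSum_zero hp]
  rw [hf0] at hfρ₁
  rw [hEMLSI]
  exact hfρ₁.trans_le
    (le_csSup (isCompact_Icc.bddAbove_image hcont) ⟨ρ₁, Set.Ioo_subset_Icc_self hρ₁, rfl⟩)

def gallagerFactor (p : X × Y → ℝ) (ρ : ℝ) (z : X × Y) : ℝ :=
  ∑ a, (p (a, z.2) / p z) ^ (1 / (1 + ρ))

lemma sum_mul_gallagerFactor_rpow (hp : IsPMF p) {ρ : ℝ} (hρ : 0 ≤ ρ) :
    ∑ z, p z * gallagerFactor p ρ z ^ ρ = gallagerSum p ρ := by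
  unfold gallagerFactor gallagerSum
  set q := 1 / (1 + ρ) with hq_def
  have hq : 0 < q := by positivity
  have hS : ∀ y, 0 ≤ ∑ a, p (a, y) ^ q := fun y => sum_nonneg fun a _ => rpow_nonneg (hp.1 _) _
  have hz : ∀ z,
      p z * (∑ a, (p (a, z.2) / p z) ^ q) ^ ρ = p z ^ q * (∑ a, p (a, z.2) ^ q) ^ ρ := by
    intro z
    rcases (hp.1 z).eq_or_lt with hz | hz
    · simp [← hz, hq.ne']
    · have hsplit : p z ^ q * p z ^ (q * ρ) = p z := by
        rw [← rpow_add hz, show q + q * ρ = 1 by rw [hq_def]; field_simp, rpow_one]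
      simp only [div_rpow (hp.1 _) (hp.1 z), ← sum_div]
      rw [div_rpow (hS _) (rpow_nonneg (hp.1 z) _), ← rpow_mul (hp.1 z)]
      nth_rw 1 [← hsplit]
      field_simp
  rw [sum_congr rfl fun z _ => hz z, Fintype.sum_prod_type_right]
  refine sum_congr rfl fun y _ => ?_
  dsimp only
  rw [← sum_mul, rpow_one_add' (hS y) (by positivity)]

lemma sum_prod_mul_prod_gallagerFactor (hp : IsPMF p) {ρ : ℝ} (hρ : 0 ≤ ρ) (t : ℕ) :
    ∑ w : Fin n → X × Y, (∏ i, p (w i)) *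
        ∏ i : Fin n, (if (i : ℕ) < t then 1 else gallagerFactor p ρ (w i) ^ ρ) =
      gallagerSum p ρ ^ (n - t) := by
  simp_rw [← prod_mul_distrib]
  rw [← Fintype.prod_sum fun (i : Fin n) (z : X × Y) =>
    p z * if (i : ℕ) < t then 1 else gallagerFactor p ρ z ^ ρ, ← prod_ite_lt_eq_pow]
  refine prod_congr rfl fun i _ => ?_
  split_ifs
  · simp [hp.2]
  · exact sum_mul_gallagerFactor_rpow hp hρ

end Gallager

section ErrorBound

variable {X Y : Type*} [Fintype X] [Fintype Y] [DecidableEq X] {p : X × Y → ℝ} {n m : ℕ}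

/-- The error event of maximum-likelihood decoding in the first `n - Δ` letters, ties counted as
errors. -/
def DecodingError (p : X × Y → ℝ) (Δ : ℕ) (w : Fin n → X × Y) (b : BinScheme X n m) : Prop :=
  ∃ x' : Fin n → X, sameBin b x' (fun i => (w i).1) ∧
    (∃ i : Fin n, (i : ℕ) < n - Δ ∧ x' i ≠ (w i).1) ∧
    (∏ i, p (w i)) ≤ ∏ i, p (x' i, (w i).2)

lemma card_likelier_le (hp : IsPMF p) (w : Fin n → X × Y) (hw : ∀ i, 0 < p (w i)) {q : ℝ}
    (hq : 0 ≤ q) (t : ℕ) :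
    (#{x' : Fin n → X | (∀ i : Fin n, (i : ℕ) < t → x' i = (w i).1) ∧
        ∏ i, p (w i) ≤ ∏ i, p (x' i, (w i).2)} : ℝ) ≤
      ∏ i : Fin n, if (i : ℕ) < t then 1 else ∑ a, (p (a, (w i).2) / p (w i)) ^ q := by
  set ratio : Fin n → X → ℝ := fun i a => (p (a, (w i).2) / p (w i)) ^ q
  have hratio : ∀ i a, 0 ≤ ratio i a := fun i a => rpow_nonneg (div_nonneg (hp.1 _) (hp.1 _)) _
  set S : ∀ i : Fin n, Finset X := fun i => if (i : ℕ) < t then {(w i).1} else univ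
  calc (#{x' : Fin n → X | (∀ i : Fin n, (i : ℕ) < t → x' i = (w i).1) ∧
          ∏ i, p (w i) ≤ ∏ i, p (x' i, (w i).2)} : ℝ)
      ≤ ∑ x' ∈ {x' : Fin n → X | (∀ i : Fin n, (i : ℕ) < t → x' i = (w i).1) ∧
          ∏ i, p (w i) ≤ ∏ i, p (x' i, (w i).2)}, ∏ i, ratio i (x' i) := by
        rw [card_eq_sum_ones, Nat.cast_sum, Nat.cast_one]
        refine sum_le_sum fun x' hx' => ?_
        rw [finsetProd_rpow _ _ (fun i _ => div_nonneg (hp.1 _) (hp.1 _)), prod_div_distrib]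
        exact one_le_rpow ((one_le_div (prod_pos fun i _ => hw i)).mpr (mem_filter.mp hx').2.2) hq
    _ ≤ ∑ x' ∈ Fintype.piFinset S, ∏ i, ratio i (x' i) := by
        refine sum_le_sum_of_subset_of_nonneg (fun x' hx' => ?_)
          fun x' _ _ => prod_nonneg fun i _ => hratio i _
        refine Fintype.mem_piFinset.mpr fun i => ?_
        by_cases hi : (i : ℕ) < t
        · simp [S, hi, (mem_filter.mp hx').2.1 i hi]
        · simp [S, hi]
    _ = ∏ i : Fin n, if (i : ℕ) < t then 1 else ∑ a, ratio i a := by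
        rw [← prod_univ_sum]
        refine prod_congr rfl fun i _ => ?_
        by_cases hi : (i : ℕ) < t
        · simp [S, hi, ratio, div_self (hw i).ne']
        · simp [S, hi]

lemma prob_decodingError_le_sum (hp : IsPMF p) (hm : m ≠ 0) (Δ : ℕ) (w : Fin n → X × Y)
    (hw : ∀ i, 0 < p (w i)) {q : ℝ} (hq : 0 ≤ q) :
    prob (fun _ : BinScheme X n m => (Fintype.card (BinScheme X n m) : ℝ)⁻¹)
        (DecodingError p Δ w) ≤
      ∑ t ∈ range (n - Δ), (m : ℝ)⁻¹ ^ (n - t) *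
        ∏ i : Fin n, if (i : ℕ) < t then 1 else ∑ a, (p (a, (w i).2) / p (w i)) ^ q := by
  set P := fun _ : BinScheme X n m => (Fintype.card (BinScheme X n m) : ℝ)⁻¹
  have hP : ∀ b, 0 ≤ P b := fun _ => by positivity
  set x : Fin n → X := fun i => (w i).1
  set U : ℕ → Finset (Fin n → X) := fun t =>
    {x' | FirstDiffAt x' x t ∧ ∏ i, p (w i) ≤ ∏ i, p (x' i, (w i).2)}
  calc prob P (DecodingError p Δ w)
      ≤ prob P (fun b => ∃ t ∈ range (n - Δ), ∃ x' ∈ U t, sameBin b x' x) := by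
        refine prob_mono hP fun b ⟨x', hbin, ⟨i, hi, hne⟩, hlik⟩ => ?_
        obtain ⟨t, hti, hfirst⟩ := exists_firstDiffAt_le (x := x) hne
        exact ⟨t, mem_range.mpr (by omega), x', mem_filter.mpr ⟨mem_univ _, hfirst, hlik⟩, hbin⟩
    _ ≤ ∑ t ∈ range (n - Δ), ∑ x' ∈ U t, prob P (fun b => sameBin b x' x) :=
        (prob_exists_le hP _ _).trans (sum_le_sum fun t _ => prob_exists_le hP _ _)
    _ = ∑ t ∈ range (n - Δ), (m : ℝ)⁻¹ ^ (n - t) * #(U t) := by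
        refine sum_congr rfl fun t _ => ?_
        rw [sum_congr rfl fun x' hx' => prob_sameBin_of_firstDiffAt hm (mem_filter.mp hx').2.1,
          sum_const, nsmul_eq_mul, mul_comm]
    _ ≤ _ := by
        refine sum_le_sum fun t _ => mul_le_mul_of_nonneg_left ?_ (by positivity)
        refine le_trans ?_ (card_likelier_le hp w hw hq t)
        refine Nat.cast_le.mpr (card_le_card fun x' hx' => ?_)
        simp only [U, mem_filter] at hx' ⊢
        exact ⟨hx'.1, hx'.2.1.1, hx'.2.2⟩

lemma prob_decodingError_le (hp : IsPMF p) (hm : m ≠ 0) (Δ : ℕ) (w : Fin n → X × Y)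
    (hw : ∀ i, 0 < p (w i)) {ρ : ℝ} (h0 : 0 ≤ ρ) (h1 : ρ ≤ 1) :
    prob (fun _ : BinScheme X n m => (Fintype.card (BinScheme X n m) : ℝ)⁻¹)
        (DecodingError p Δ w) ≤
      ∑ t ∈ range (n - Δ), ((m : ℝ)⁻¹ ^ ρ) ^ (n - t) *
        ∏ i : Fin n, if (i : ℕ) < t then 1 else gallagerFactor p ρ (w i) ^ ρ := by
  have hfactor : ∀ z, 0 ≤ gallagerFactor p ρ z :=
    fun z => sum_nonneg fun a _ => rpow_nonneg (div_nonneg (hp.1 _) (hp.1 _)) _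
  have hprod : ∀ t : ℕ, 0 ≤ ∏ i : Fin n, if (i : ℕ) < t then 1 else gallagerFactor p ρ (w i) :=
    fun t => prod_nonneg fun i _ => by split_ifs <;> simp [hfactor]
  have hcard : (Fintype.card (BinScheme X n m) : ℝ) ≠ 0 := by
    have : NeZero m := ⟨hm⟩
    exact_mod_cast Fintype.card_ne_zero
  have hle_one : prob (fun _ : BinScheme X n m => (Fintype.card (BinScheme X n m) : ℝ)⁻¹)
      (DecodingError p Δ w) ≤ 1 :=
    (prob_le_sum (fun _ => by positivity) _).trans_eq
      (by rw [sum_const, card_univ, nsmul_eq_mul, mul_inv_cancel₀ hcard])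
  have hsum : prob (fun _ : BinScheme X n m => (Fintype.card (BinScheme X n m) : ℝ)⁻¹)
      (DecodingError p Δ w) ≤ ∑ t ∈ range (n - Δ), (m : ℝ)⁻¹ ^ (n - t) *
        ∏ i : Fin n, if (i : ℕ) < t then 1 else gallagerFactor p ρ (w i) :=
    prob_decodingError_le_sum hp hm Δ w hw (by positivity)
  refine (le_min hle_one hsum).trans <|
    (min_one_sum_le_sum_rpow (fun t _ => by positivity [hprod t]) h0 h1).trans_eq
      (sum_congr rfl fun t _ => ?_)
  rw [mul_rpow (by positivity) (hprod t), ← rpow_pow_comm (by positivity),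
    ← finsetProd_rpow _ _ fun i _ => by split_ifs <;> simp [hfactor]]
  congr 1
  refine prod_congr rfl fun i _ => ?_
  split_ifs <;> simp [gallagerFactor]

theorem prob_decodingError_le_geometric (hp : IsPMF p) (hm : m ≠ 0) {ρ : ℝ} (h0 : 0 ≤ ρ)
    (h1 : ρ ≤ 1) (hr : (m : ℝ)⁻¹ ^ ρ * gallagerSum p ρ < 1) {Δ : ℕ} (hΔ : Δ ≤ n) :
    prob (fun ω : (Fin n → X × Y) × BinScheme X n m =>
        (∏ i, p (ω.1 i)) / (Fintype.card (BinScheme X n m) : ℝ))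
      (fun ω => DecodingError p Δ ω.1 ω.2) ≤
      ((m : ℝ)⁻¹ ^ ρ * gallagerSum p ρ) ^ Δ / (1 - (m : ℝ)⁻¹ ^ ρ * gallagerSum p ρ) := by
  set c := (m : ℝ)⁻¹ ^ ρ
  have hc : 0 ≤ c := by positivity
  refine (prob_prod_div (fun w : Fin n → X × Y => ∏ i, p (w i)) _ _).trans_le ?_
  calc ∑ w : Fin n → X × Y, (∏ i, p (w i)) *
        prob (fun _ : BinScheme X n m => (Fintype.card (BinScheme X n m) : ℝ)⁻¹)
          (DecodingError p Δ w)
      ≤ ∑ w : Fin n → X × Y, (∏ i, p (w i)) * ∑ t ∈ range (n - Δ), c ^ (n - t) *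
          ∏ i : Fin n, (if (i : ℕ) < t then 1 else gallagerFactor p ρ (w i) ^ ρ) := by
        refine sum_le_sum fun w _ => ?_
        by_cases hw : ∀ i, 0 < p (w i)
        · exact mul_le_mul_of_nonneg_left (prob_decodingError_le hp hm Δ w hw h0 h1)
            (prod_nonneg fun i _ => hp.1 _)
        · push Not at hw
          obtain ⟨i, hi⟩ := hw
          rw [prod_eq_zero (mem_univ i) (le_antisymm hi (hp.1 (w i))), zero_mul, zero_mul]
    _ = ∑ t ∈ range (n - Δ), c ^ (n - t) * ∑ w : Fin n → X × Y, (∏ i, p (w i)) *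
          ∏ i : Fin n, (if (i : ℕ) < t then 1 else gallagerFactor p ρ (w i) ^ ρ) := by
        simp_rw [mul_sum]
        rw [sum_comm]
        exact sum_congr rfl fun t _ => sum_congr rfl fun w _ => by ring
    _ = ∑ t ∈ range (n - Δ), (c * gallagerSum p ρ) ^ (n - t) := by
        simp_rw [sum_prod_mul_prod_gallagerFactor hp h0, mul_pow]
    _ ≤ _ := sum_range_pow_sub_le (mul_nonneg hc (gallagerSum_pos hp ρ).le) hr hΔ

end ErrorBound

end CausalBinning

open CausalBinning

theorem statement4_general {X Y : Type*} [Fintype X] [Fintype Y] [DecidableEq X]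
    (p : X × Y → ℝ) (hp : IsPMF p)
    (m : ℕ) (hm : 2 ≤ m) (R : ℝ) (hR : R = Real.log m) (hRH : condEntXY p < R) :
    ∃ K : ℝ, 0 < K ∧
      ∀ n : ℕ, 1 ≤ n → ∀ Δ : ℕ, Δ ≤ n - 1 →
        prob
          (fun ω : (Fin n → X × Y) × BinScheme X n m =>
            (∏ i, p (ω.1 i)) / (Fintype.card (BinScheme X n m) : ℝ))
          (fun ω => ∃ x' : Fin n → X,
            sameBin ω.2 x' (fun i => (ω.1 i).1) ∧
            (∃ i : Fin n, (i : ℕ) < n - Δ ∧ x' i ≠ (ω.1 i).1) ∧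
            (∏ i, p (ω.1 i)) ≤ (∏ i, p (x' i, (ω.1 i).2)))
        ≤ K * Real.exp (-(Δ : ℝ) * EMLSI p R) := by
  obtain ⟨ρ, ⟨h0, h1⟩, hE, hEpos⟩ := exists_EMLSI_eq_of_condEntXY_lt hp hRH
  have hm0 : (0 : ℝ) < m := by norm_cast; omega
  have hr : (m : ℝ)⁻¹ ^ ρ * gallagerSum p ρ = exp (-EMLSI p R) := by
    rw [hE, hR, neg_sub, exp_sub, exp_log (gallagerSum_pos hp ρ), ← log_rpow hm0,
      exp_log (rpow_pos_of_pos hm0 ρ), inv_rpow hm0.le, div_eq_mul_inv, mul_comm]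
  have hr1 : exp (-EMLSI p R) < 1 := exp_lt_one_iff.mpr (neg_lt_zero.mpr hEpos)
  refine ⟨(1 - exp (-EMLSI p R))⁻¹, inv_pos.mpr (sub_pos.mpr hr1), fun n _ Δ hΔ => ?_⟩
  calc _ ≤ exp (-EMLSI p R) ^ Δ / (1 - exp (-EMLSI p R)) :=
        hr ▸ prob_decodingError_le_geometric hp (by omega) h0 h1 (hr ▸ hr1) (by omega)
    _ = _ := by rw [← exp_nat_mul]; ring_nf

/-- Streaming source coding with decoder side information, ML decoding (Theorem 4). -/
theorem statement4 {X Y : Type*} [Fintype X] [Fintype Y] [DecidableEq X]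
    [Nonempty X] [Nonempty Y]
    (p : X × Y → ℝ) (hp : IsPMF p)
    (m : ℕ) (hm : 2 ≤ m) (R : ℝ) (hR : R = Real.log m) (hRH : condEntXY p < R) :
    ∃ K : ℝ, 0 < K ∧
      ∀ n : ℕ, 1 ≤ n → ∀ Δ : ℕ, Δ ≤ n - 1 →
        prob
          (fun ω : (Fin n → X × Y) × BinScheme X n m =>
            (∏ i, p (ω.1 i)) / (Fintype.card (BinScheme X n m) : ℝ))
          (fun ω => ∃ x' : Fin n → X,
            sameBin ω.2 x' (fun i => (ω.1 i).1) ∧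
            (∃ i : Fin n, (i : ℕ) < n - Δ ∧ x' i ≠ (ω.1 i).1) ∧
            (∏ i, p (ω.1 i)) ≤ (∏ i, p (x' i, (ω.1 i).2)))
        ≤ K * Real.exp (-(Δ : ℝ) * EMLSI p R) :=
  statement4_general p hp m hm R hR hRH
end
end

section
/- Suppose p(x,y) > 0 for all (x,y), R_x > H_p(x|y), R_y > H_p(y|x), and R_x + R_y > H(p). Then for every γ ∈ [0,1]: sup_{ρ∈[0,1]} [γ·E_{x|y}(R_x,ρ) + (1−γ)·E_{xy}(R_x,R_y,ρ)] = inf over pairs of probability mass functions (q,o) on X×Y of [γ·D(q‖p) + (1−γ)·D(o‖p) + max(0, γ(R_x − H_q(x|y)) + (1−γ)(R_x + R_y − H(o)))]. -/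
open scoped BigOperators

noncomputable section

/-- `E_{xy}(R_x,R_y,ρ)`. -/
def Exy {X Y : Type*} [Fintype X] [Fintype Y] (p : X × Y → ℝ) (Rx Ry ρ : ℝ) : ℝ :=
  ρ * (Rx + Ry) - (1 + ρ) * Real.log (∑ z : X × Y, p z ^ (1 / (1 + ρ)))

/-- `E_{x|y}(R_x,ρ)`. -/
def Exgy {X Y : Type*} [Fintype X] [Fintype Y] (p : X × Y → ℝ) (Rx ρ : ℝ) : ℝ :=
  ρ * Rx - Real.log (∑ y, (∑ x, p (x, y) ^ (1 / (1 + ρ))) ^ (1 + ρ))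

/-!
For `ρ ≥ 0` both exponents are variational formulas. The log-sum (Gibbs) inequality gives
`E_{xy}(ρ) ≤ D(o‖p) + ρ (R_x + R_y − H(o))`, with equality at the tilted law `o_ρ ∝ p^{1/(1+ρ)}`;
applying it once more to the `y`-marginal gives `E_{x|y}(ρ) ≤ D(q‖p) + ρ (R_x − H_q(x|y))`, with
equality at `q_ρ(x,y) ∝ p(x,y)^{1/(1+ρ)} (∑_x' p(x',y)^{1/(1+ρ)})^ρ`. As `ρ A ≤ max 0 A` for
`ρ ∈ [0,1]`, every value of the supremum is below every value of the infimum. Conversely the slack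
`A(ρ) = γ (R_x − H_{q_ρ}(x|y)) + (1 − γ) (R_x + R_y − H(o_ρ))` is continuous with `A(0) ≥ 0`
(since `q_0 = o_0 = p`); either `A(1) ≥ 0` or `A` vanishes somewhere in `[0,1]`, and at such a
`ρ` we have `ρ A(ρ) = max 0 (A ρ)`, so the pair `(q_ρ, o_ρ)` attains the value at `ρ`.
-/

open Real Finset

section LogSum

variable {Z : Type*} [Fintype Z]

lemma sub_le_mul_log_div {a c : ℝ} (ha : 0 ≤ a) (hc : 0 < c) : a - c ≤ a * log (a / c) := by
  calc a - c = c * (a / c - 1) := by field_simp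
    _ ≤ c * (a / c * log (a / c)) := by gcongr; exact self_sub_one_le_mul_log (by positivity)
    _ = a * log (a / c) := by field_simp

lemma sum_mul_log_div_sum_le {a b : Z → ℝ} (ha : ∀ z, 0 ≤ a z) (hb : ∀ z, 0 < b z) :
    (∑ z, a z) * log ((∑ z, a z) / ∑ z, b z) ≤ ∑ z, a z * log (a z / b z) := by
  rcases (sum_nonneg fun z _ => ha z).eq_or_lt with hs | hs
  · have hzero : ∀ z, a z = 0 := fun z =>
      (sum_eq_zero_iff_of_nonneg fun z _ => ha z).1 hs.symm z (mem_univ z)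
    simp [hzero]
  have : Nonempty Z := by
    by_contra h
    simp [not_nonempty_iff.1 h] at hs
  set k := (∑ z, a z) / ∑ z, b z
  have hk : 0 < k := div_pos hs (sum_pos (fun z _ => hb z) univ_nonempty)
  have hpt : ∀ z, a z * log k + (a z - k * b z) ≤ a z * log (a z / b z) := fun z => by
    rcases (ha z).eq_or_lt with h | h
    · rw [← h]; nlinarith [hb z]
    have := sub_le_mul_log_div (ha z) (mul_pos hk (hb z))
    rw [log_div h.ne' (mul_pos hk (hb z)).ne', log_mul hk.ne' (hb z).ne'] at this
    rw [log_div h.ne' (hb z).ne']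
    linarith
  calc (∑ z, a z) * log k
      = ∑ z, (a z * log k + (a z - k * b z)) := by
        have hkb : k * ∑ z, b z = ∑ z, a z :=
          div_mul_cancel₀ _ (sum_pos (fun z _ => hb z) univ_nonempty).ne'
        rw [sum_add_distrib, sum_sub_distrib, ← sum_mul, ← mul_sum, hkb]
        ring
    _ ≤ ∑ z, a z * log (a z / b z) := sum_le_sum fun z _ => hpt z

lemma sum_mul_log_div_eq_of_eq_mul {a b : Z → ℝ} (hb : ∀ z, b z ≠ 0) (k : ℝ)
    (hab : ∀ z, a z = k * b z) :
    ∑ z, a z * log (a z / b z) = (∑ z, a z) * log ((∑ z, a z) / ∑ z, b z) := by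
  have hsum : ∑ z, a z = k * ∑ z, b z := by rw [mul_sum]; exact sum_congr rfl fun z _ => hab z
  have hratio : ∀ z, a z / b z = k := fun z => by rw [hab, mul_div_assoc, div_self (hb z), mul_one]
  simp_rw [hratio, ← sum_mul]
  rcases eq_or_ne (∑ z, b z) 0 with h0 | h0
  · simp [hsum, h0]
  · rw [hsum, mul_div_assoc, div_self h0, mul_one]

end LogSum

section Tilt

def tiltWeight {Z : Type*} (p : Z → ℝ) (ρ : ℝ) : Z → ℝ := fun z => p z ^ (1 / (1 + ρ))

lemma tiltWeight_pos {Z : Type*} {p : Z → ℝ} (hp : ∀ z, 0 < p z) (ρ : ℝ) (z : Z) :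
    0 < tiltWeight p ρ z :=
  rpow_pos_of_pos (hp z) _

lemma tiltWeight_zero {Z : Type*} (p : Z → ℝ) : tiltWeight p 0 = p := by
  ext z
  simp [tiltWeight]

variable {Z : Type*} [Fintype Z]

def normalized (w : Z → ℝ) : Z → ℝ := fun z => w z / ∑ z', w z'

def jointTilt (p : Z → ℝ) (ρ : ℝ) : Z → ℝ := normalized (tiltWeight p ρ)

lemma isPMF_normalized [Nonempty Z] {w : Z → ℝ} (hw : ∀ z, 0 < w z) : IsPMF (normalized w) := by
  refine ⟨fun z => div_nonneg (hw z).le (sum_nonneg fun z _ => (hw z).le), ?_⟩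
  simp only [normalized]
  rw [← sum_div, div_self (sum_pos (fun z _ => hw z) univ_nonempty).ne']

lemma isPMF_jointTilt [Nonempty Z] {p : Z → ℝ} (hp : ∀ z, 0 < p z) (ρ : ℝ) :
    IsPMF (jointTilt p ρ) :=
  isPMF_normalized (tiltWeight_pos hp ρ)

lemma normalized_of_isPMF {p : Z → ℝ} (hp : IsPMF p) : normalized p = p := by
  ext z
  rw [normalized, hp.2, div_one]

lemma jointTilt_zero {p : Z → ℝ} (hp : IsPMF p) : jointTilt p 0 = p := by
  rw [jointTilt, tiltWeight_zero, normalized_of_isPMF hp]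

end Tilt

section KL

variable {Z : Type*} [Fintype Z]

lemma neg_log_sum_le_klDiv {q w : Z → ℝ} (hq : IsPMF q) (hw : ∀ z, 0 < w z) :
    -log (∑ z, w z) ≤ klDiv q w := by
  have := sum_mul_log_div_sum_le hq.1 hw
  rwa [hq.2, one_mul, one_div, log_inv] at this

lemma klDiv_normalized [Nonempty Z] {w : Z → ℝ} (hw : ∀ z, 0 < w z) :
    klDiv (normalized w) w = -log (∑ z, w z) := by
  rw [klDiv, sum_mul_log_div_eq_of_eq_mul (a := normalized w) (fun z => (hw z).ne') (∑ z, w z)⁻¹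
    fun z => (inv_mul_eq_div _ _).symm, (isPMF_normalized hw).2, one_div, log_inv, one_mul]

lemma klDiv_rpow_right {q w : Z → ℝ} (hq : ∀ z, 0 ≤ q z) (hw : ∀ z, 0 < w z) (c : ℝ) :
    klDiv q (fun z => w z ^ c) = c * klDiv q w + (c - 1) * entropy q := by
  rw [klDiv, klDiv, entropy, mul_neg, mul_sum, mul_sum, ← sum_neg_distrib, ← sum_add_distrib]
  refine sum_congr rfl fun z _ => ?_
  rcases (hq z).eq_or_lt with h | h
  · simp [← h]
  rw [log_div h.ne' (rpow_pos_of_pos (hw z) c).ne', log_div h.ne' (hw z).ne', log_rpow (hw z)]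
  ring

lemma klDiv_sub_mul_entropy {q p : Z → ℝ} (hq : ∀ z, 0 ≤ q z) (hp : ∀ z, 0 < p z) {ρ : ℝ}
    (hρ : 1 + ρ ≠ 0) :
    klDiv q p - ρ * entropy q = (1 + ρ) * klDiv q (tiltWeight p ρ) := by
  unfold tiltWeight
  rw [klDiv_rpow_right hq hp]
  field_simp
  ring

end KL

section Marginal

lemma margY_nonneg {X Y : Type*} [Fintype X] {q : X × Y → ℝ} (hq : ∀ z, 0 ≤ q z) (y : Y) :
    0 ≤ margY q y :=
  sum_nonneg fun x _ => hq (x, y)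

lemma margY_pos {X Y : Type*} [Fintype X] [Nonempty X] {q : X × Y → ℝ} (hq : ∀ z, 0 < q z)
    (y : Y) : 0 < margY q y :=
  sum_pos (fun x _ => hq (x, y)) univ_nonempty

variable {X Y : Type*} [Fintype X] [Fintype Y]

lemma sum_margY (q : X × Y → ℝ) : ∑ y, margY q y = ∑ z, q z :=
  (Fintype.sum_prod_type_right q).symm

lemma IsPMF.margY {q : X × Y → ℝ} (hq : IsPMF q) : IsPMF (margY q) :=
  ⟨margY_nonneg hq.1, (sum_margY q).trans hq.2⟩

lemma margY_normalized (w : X × Y → ℝ) : margY (normalized w) = normalized (margY w) := by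
  ext y
  simp only [margY, normalized, ← sum_div]
  rw [← sum_margY]
  rfl

lemma klDiv_margY_le {q w : X × Y → ℝ} (hq : ∀ z, 0 ≤ q z) (hw : ∀ z, 0 < w z) :
    klDiv (margY q) (margY w) ≤ klDiv q w := by
  rw [klDiv, klDiv, Fintype.sum_prod_type_right]
  exact sum_le_sum fun y _ => sum_mul_log_div_sum_le (fun x => hq _) fun x => hw _

lemma klDiv_margY_eq_of_eq_mul {q w : X × Y → ℝ} (hw : ∀ z, w z ≠ 0) (k : Y → ℝ)
    (hqw : ∀ x y, q (x, y) = k y * w (x, y)) :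
    klDiv (margY q) (margY w) = klDiv q w := by
  rw [klDiv, klDiv, Fintype.sum_prod_type_right]
  exact sum_congr rfl fun y _ =>
    (sum_mul_log_div_eq_of_eq_mul (fun x => hw _) (k y) fun x => hqw x y).symm

end Marginal

section Exponents

variable {X Y : Type*} [Fintype X] [Fintype Y] {p : X × Y → ℝ}

lemma Exy_le (hp : ∀ z, 0 < p z) (Rx Ry : ℝ) {ρ : ℝ} (hρ : 0 ≤ ρ) {o : X × Y → ℝ}
    (ho : IsPMF o) : Exy p Rx Ry ρ ≤ klDiv o p + ρ * (Rx + Ry - entropy o) := by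
  have hgibbs := neg_log_sum_le_klDiv ho (tiltWeight_pos hp ρ)
  have htilt := klDiv_sub_mul_entropy ho.1 hp (ρ := ρ) (by linarith)
  have : (1 + ρ) * -log (∑ z, tiltWeight p ρ z) ≤ klDiv o p - ρ * entropy o :=
    htilt ▸ mul_le_mul_of_nonneg_left hgibbs (by linarith)
  rw [Exy]
  change _ - _ * log (∑ z, tiltWeight p ρ z) ≤ _
  linarith

lemma klDiv_jointTilt_add [Nonempty X] [Nonempty Y] (hp : ∀ z, 0 < p z) (Rx Ry : ℝ) {ρ : ℝ}
    (hρ : 0 ≤ ρ) :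
    klDiv (jointTilt p ρ) p + ρ * (Rx + Ry - entropy (jointTilt p ρ)) = Exy p Rx Ry ρ := by
  have htilt := klDiv_sub_mul_entropy (isPMF_jointTilt hp ρ).1 hp (ρ := ρ) (by linarith)
  rw [jointTilt, klDiv_normalized (tiltWeight_pos hp ρ), ← jointTilt] at htilt
  rw [Exy]
  change _ = _ - _ * log (∑ z, tiltWeight p ρ z)
  linarith

lemma klDiv_sub_mul_condEntXY [Nonempty X] {q : X × Y → ℝ} (hq : ∀ z, 0 ≤ q z)
    (hp : ∀ z, 0 < p z) {ρ : ℝ} (hρ : 1 + ρ ≠ 0) :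
    klDiv q p - ρ * condEntXY q =
      (1 + ρ) * (klDiv q (tiltWeight p ρ) - klDiv (margY q) (margY (tiltWeight p ρ))) +
        klDiv (margY q) (fun y => margY (tiltWeight p ρ) y ^ (1 + ρ)) := by
  rw [klDiv_rpow_right (margY_nonneg hq) (margY_pos (tiltWeight_pos hp ρ)), condEntXY]
  linear_combination klDiv_sub_mul_entropy hq hp hρ

lemma Exgy_le [Nonempty X] (hp : ∀ z, 0 < p z) (Rx : ℝ) {ρ : ℝ} (hρ : 0 ≤ ρ)
    {q : X × Y → ℝ} (hq : IsPMF q) : Exgy p Rx ρ ≤ klDiv q p + ρ * (Rx - condEntXY q) := by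
  have hid := klDiv_sub_mul_condEntXY hq.1 hp (ρ := ρ) (by linarith)
  have hdp := klDiv_margY_le hq.1 (tiltWeight_pos hp ρ)
  have hgibbs := neg_log_sum_le_klDiv hq.margY
    fun y => rpow_pos_of_pos (margY_pos (tiltWeight_pos hp ρ) y) (1 + ρ)
  rw [Exgy]
  change _ - log (∑ y, margY (tiltWeight p ρ) y ^ (1 + ρ)) ≤ _
  nlinarith [mul_nonneg (by linarith : (0 : ℝ) ≤ 1 + ρ) (sub_nonneg.2 hdp)]

lemma condTilt_weight_pos {X Y : Type*} [Fintype X] [Nonempty X] {p : X × Y → ℝ}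
    (hp : ∀ z, 0 < p z) (ρ : ℝ) (z : X × Y) :
    0 < tiltWeight p ρ z * margY (tiltWeight p ρ) z.2 ^ ρ :=
  mul_pos (tiltWeight_pos hp ρ z) (rpow_pos_of_pos (margY_pos (tiltWeight_pos hp ρ) _) ρ)

def condTilt (p : X × Y → ℝ) (ρ : ℝ) : X × Y → ℝ :=
  normalized fun z => tiltWeight p ρ z * margY (tiltWeight p ρ) z.2 ^ ρ

lemma isPMF_condTilt [Nonempty X] [Nonempty Y] (hp : ∀ z, 0 < p z) (ρ : ℝ) :
    IsPMF (condTilt p ρ) :=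
  isPMF_normalized (condTilt_weight_pos hp ρ)

lemma condTilt_zero (hp : IsPMF p) : condTilt p 0 = p := by
  simp only [condTilt, tiltWeight_zero, rpow_zero, mul_one]
  exact normalized_of_isPMF hp

lemma margY_condTilt [Nonempty X] (hp : ∀ z, 0 < p z) (ρ : ℝ) :
    margY (condTilt p ρ) = normalized fun y => margY (tiltWeight p ρ) y ^ (1 + ρ) := by
  rw [condTilt, margY_normalized]
  congr 1
  ext y
  rw [margY]
  dsimp only
  rw [← sum_mul, rpow_add (margY_pos (tiltWeight_pos hp ρ) y), rpow_one]
  rfl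

lemma klDiv_condTilt_add [Nonempty X] [Nonempty Y] (hp : ∀ z, 0 < p z) (Rx : ℝ) {ρ : ℝ}
    (hρ : 0 ≤ ρ) :
    klDiv (condTilt p ρ) p + ρ * (Rx - condEntXY (condTilt p ρ)) = Exgy p Rx ρ := by
  have hid := klDiv_sub_mul_condEntXY (isPMF_condTilt hp ρ).1 hp (ρ := ρ) (by linarith)
  -- on each fibre `y`, `condTilt p ρ` is a multiple of `tiltWeight p ρ`: the log-sum bound is tight
  have hdp : klDiv (margY (condTilt p ρ)) (margY (tiltWeight p ρ)) =
      klDiv (condTilt p ρ) (tiltWeight p ρ) :=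
    klDiv_margY_eq_of_eq_mul (fun z => (tiltWeight_pos hp ρ z).ne')
      (fun y => margY (tiltWeight p ρ) y ^ ρ /
        ∑ z, tiltWeight p ρ z * margY (tiltWeight p ρ) z.2 ^ ρ)
      fun x y => by simp only [condTilt, normalized]; ring
  have hgibbs := klDiv_normalized
    fun y => rpow_pos_of_pos (margY_pos (tiltWeight_pos hp ρ) y) (1 + ρ)
  rw [← margY_condTilt hp] at hgibbs
  rw [hdp, hgibbs, sub_self, mul_zero, zero_add] at hid
  rw [Exgy]
  change _ = _ - log (∑ y, margY (tiltWeight p ρ) y ^ (1 + ρ))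
  linarith

end Exponents

section Continuity

lemma continuousOn_tiltWeight {Z : Type*} {p : Z → ℝ} (hp : ∀ z, 0 < p z) :
    ContinuousOn (tiltWeight p) (Set.Ioi (-1)) :=
  continuousOn_pi.2 fun z => continuousOn_const.rpow
    (continuousOn_const.div (by fun_prop) fun ρ (hρ : -1 < ρ) => by linarith)
    fun _ _ => Or.inl (hp z).ne'

lemma continuous_margY {X Y : Type*} [Fintype X] : Continuous (margY : (X × Y → ℝ) → Y → ℝ) :=
  continuous_pi fun _ => continuous_finsetSum _ fun _ _ => continuous_apply _

variable {Z : Type*} [Fintype Z]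

lemma continuous_entropy : Continuous (entropy : (Z → ℝ) → ℝ) :=
  (continuous_finsetSum _ fun z _ => (continuous_apply z).mul_log).neg

lemma continuous_condEntXY {X Y : Type*} [Fintype X] [Fintype Y] :
    Continuous (condEntXY : (X × Y → ℝ) → ℝ) :=
  continuous_entropy.sub (continuous_entropy.comp continuous_margY)

lemma ContinuousOn.normalized {α : Type*} [TopologicalSpace α] {f : α → Z → ℝ} {s : Set α}
    (hf : ContinuousOn f s) (h : ∀ a ∈ s, ∑ z, f a z ≠ 0) :
    ContinuousOn (fun a => normalized (f a)) s :=
  continuousOn_pi.2 fun z => (continuousOn_pi.1 hf z).div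
    (continuousOn_finsetSum _ fun z' _ => continuousOn_pi.1 hf z') h

lemma continuousOn_jointTilt [Nonempty Z] {p : Z → ℝ} (hp : ∀ z, 0 < p z) :
    ContinuousOn (jointTilt p) (Set.Ioi (-1)) :=
  (continuousOn_tiltWeight hp).normalized fun ρ _ =>
    (sum_pos (fun z _ => tiltWeight_pos hp ρ z) univ_nonempty).ne'

lemma continuousOn_condTilt {X Y : Type*} [Fintype X] [Fintype Y] [Nonempty X] [Nonempty Y]
    {p : X × Y → ℝ} (hp : ∀ z, 0 < p z) : ContinuousOn (condTilt p) (Set.Ioi (-1)) := by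
  have hw := continuousOn_tiltWeight hp
  have hS := continuous_margY.comp_continuousOn hw
  refine ContinuousOn.normalized (continuousOn_pi.2 fun z => ?_) fun ρ _ =>
    (sum_pos (fun z _ => condTilt_weight_pos hp ρ z) univ_nonempty).ne'
  exact (continuousOn_pi.1 hw z).mul
    ((continuousOn_pi.1 hS z.2).rpow continuousOn_id fun ρ _ =>
      Or.inl (margY_pos (tiltWeight_pos hp ρ) z.2).ne')

end Continuity

lemma mul_le_max_zero {ρ a : ℝ} (hρ : ρ ∈ Set.Icc (0 : ℝ) 1) : ρ * a ≤ max 0 a := by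
  rcases le_total 0 a with h | h
  · exact (mul_le_of_le_one_left h hρ.2).trans (le_max_right 0 a)
  · exact (mul_nonpos_of_nonneg_of_nonpos hρ.1 h).trans (le_max_left 0 a)

lemma exists_max_zero_eq_mul {A : ℝ → ℝ} (hA : ContinuousOn A (Set.Icc 0 1)) (hA0 : 0 ≤ A 0) :
    ∃ ρ ∈ Set.Icc (0 : ℝ) 1, max 0 (A ρ) = ρ * A ρ := by
  rcases le_or_gt 0 (A 1) with h1 | h1
  · exact ⟨1, by simp, by rw [max_eq_right h1, one_mul]⟩
  · obtain ⟨ρ, hρ, hAρ⟩ := intermediate_value_Icc' zero_le_one hA ⟨h1.le, hA0⟩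
    exact ⟨ρ, hρ, by rw [hAρ, max_self, mul_zero]⟩

lemma csSup_image_eq_csInf_image_of_le {α β L : Type*} [ConditionallyCompleteLattice L]
    {f : α → L} {g : β → L} {s : Set α} {t : Set β} (hle : ∀ a ∈ s, ∀ b ∈ t, f a ≤ g b)
    {a₀ : α} {b₀ : β} (ha₀ : a₀ ∈ s) (hb₀ : b₀ ∈ t) (heq : g b₀ = f a₀) :
    sSup (f '' s) = sInf (g '' t) := by
  have hsup : IsGreatest (f '' s) (f a₀) :=
    ⟨Set.mem_image_of_mem f ha₀, Set.forall_mem_image.2 fun a ha => heq ▸ hle a ha b₀ hb₀⟩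
  have hinf : IsLeast (g '' t) (g b₀) :=
    ⟨Set.mem_image_of_mem g hb₀, Set.forall_mem_image.2 fun b hb => heq.symm ▸ hle a₀ ha₀ b hb⟩
  rw [hsup.csSup_eq, hinf.csInf_eq, heq]

section Duality

variable {X Y : Type*} [Fintype X] [Fintype Y] {p : X × Y → ℝ} {Rx Ry γ : ℝ}

lemma exponent_le_objective [Nonempty X] (hp : ∀ z, 0 < p z) (hγ : γ ∈ Set.Icc (0 : ℝ) 1)
    {ρ : ℝ} (hρ : ρ ∈ Set.Icc (0 : ℝ) 1) {q o : X × Y → ℝ} (hq : IsPMF q) (ho : IsPMF o) :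
    γ * Exgy p Rx ρ + (1 - γ) * Exy p Rx Ry ρ ≤
      γ * klDiv q p + (1 - γ) * klDiv o p +
        max 0 (γ * (Rx - condEntXY q) + (1 - γ) * (Rx + Ry - entropy o)) := by
  have hx := mul_le_mul_of_nonneg_left (Exgy_le hp Rx hρ.1 hq) hγ.1
  have hxy := mul_le_mul_of_nonneg_left (Exy_le hp Rx Ry hρ.1 ho) (sub_nonneg.2 hγ.2)
  have := mul_le_max_zero hρ (a := γ * (Rx - condEntXY q) + (1 - γ) * (Rx + Ry - entropy o))
  linarith

lemma objective_tilt_eq [Nonempty X] [Nonempty Y] (hp : ∀ z, 0 < p z) {ρ : ℝ} (hρ : 0 ≤ ρ)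
    (hmax : max 0 (γ * (Rx - condEntXY (condTilt p ρ)) +
        (1 - γ) * (Rx + Ry - entropy (jointTilt p ρ))) =
      ρ * (γ * (Rx - condEntXY (condTilt p ρ)) +
        (1 - γ) * (Rx + Ry - entropy (jointTilt p ρ)))) :
    γ * klDiv (condTilt p ρ) p + (1 - γ) * klDiv (jointTilt p ρ) p +
        max 0 (γ * (Rx - condEntXY (condTilt p ρ)) +
          (1 - γ) * (Rx + Ry - entropy (jointTilt p ρ))) =
      γ * Exgy p Rx ρ + (1 - γ) * Exy p Rx Ry ρ := by
  rw [hmax, ← klDiv_condTilt_add hp Rx hρ, ← klDiv_jointTilt_add hp Rx Ry hρ]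
  ring

end Duality

theorem statement11_general {X Y : Type*} [Fintype X] [Fintype Y] [Nonempty X] [Nonempty Y]
    (p : X × Y → ℝ) (hp : IsPMF p) (hpos : ∀ z, 0 < p z)
    (Rx Ry : ℝ)
    (hx : condEntXY p < Rx) (hxy : entropy p < Rx + Ry)
    (γ : ℝ) (hγ : γ ∈ Set.Icc (0 : ℝ) 1) :
    sSup ((fun ρ : ℝ => γ * Exgy p Rx ρ + (1 - γ) * Exy p Rx Ry ρ) '' Set.Icc 0 1) =
      sInf ((fun qo : (X × Y → ℝ) × (X × Y → ℝ) =>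
          γ * klDiv qo.1 p + (1 - γ) * klDiv qo.2 p +
            max 0 (γ * (Rx - condEntXY qo.1) + (1 - γ) * (Rx + Ry - entropy qo.2))) ''
        {qo | IsPMF qo.1 ∧ IsPMF qo.2}) := by
  set A : ℝ → ℝ := fun ρ =>
    γ * (Rx - condEntXY (condTilt p ρ)) + (1 - γ) * (Rx + Ry - entropy (jointTilt p ρ))
  have hA : ContinuousOn A (Set.Icc 0 1) := by
    have hcond := continuous_condEntXY.comp_continuousOn (continuousOn_condTilt hpos)
    have hjoint := continuous_entropy.comp_continuousOn (continuousOn_jointTilt hpos)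
    exact (ContinuousOn.add (continuousOn_const.mul (continuousOn_const.sub hcond))
      (continuousOn_const.mul (continuousOn_const.sub hjoint))).mono
        ((Set.Icc_subset_Ioi_iff zero_le_one).2 (by norm_num))
  have hA0 : 0 ≤ A 0 := by
    simp only [A, condTilt_zero hp, jointTilt_zero hp]
    exact add_nonneg (mul_nonneg hγ.1 (sub_nonneg.2 hx.le))
      (mul_nonneg (sub_nonneg.2 hγ.2) (sub_nonneg.2 hxy.le))
  obtain ⟨ρ, hρ, hmax⟩ := exists_max_zero_eq_mul hA hA0
  exact csSup_image_eq_csInf_image_of_le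
    (fun ρ hρ qo hqo => exponent_le_objective hpos hγ hρ hqo.1 hqo.2) hρ
    (b₀ := (condTilt p ρ, jointTilt p ρ)) ⟨isPMF_condTilt hpos ρ, isPMF_jointTilt hpos ρ⟩
    (objective_tilt_eq hpos hρ.1 hmax)

/-- Lemma (appendix): the ML and universal exponents agree,
`E_x^{ML}(R_x,R_y,γ) = E_x^{UN}(R_x,R_y,γ)` for all `γ ∈ [0,1]`. -/
theorem statement11 {X Y : Type*} [Fintype X] [Fintype Y] [Nonempty X] [Nonempty Y]
    (p : X × Y → ℝ) (hp : IsPMF p) (hpos : ∀ z, 0 < p z)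
    (Rx Ry : ℝ)
    (hx : condEntXY p < Rx) (hy : condEntYX p < Ry) (hxy : entropy p < Rx + Ry)
    (γ : ℝ) (hγ : γ ∈ Set.Icc (0 : ℝ) 1) :
    sSup ((fun ρ : ℝ => γ * Exgy p Rx ρ + (1 - γ) * Exy p Rx Ry ρ) '' Set.Icc 0 1) =
      sInf ((fun qo : (X × Y → ℝ) × (X × Y → ℝ) =>
          γ * klDiv qo.1 p + (1 - γ) * klDiv qo.2 p +
            max 0 (γ * (Rx - condEntXY qo.1) + (1 - γ) * (Rx + Ry - entropy qo.2))) ''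
        {qo | IsPMF qo.1 ∧ IsPMF qo.2}) :=
  statement11_general p hp hpos Rx Ry hx hxy γ hγ
end
end

section
/- For every ρ > −1, the Kullback–Leibler divergence of the tilted distribution from p satisfies D(p^ρ‖p) = ρ·H(p^ρ) − (1+ρ)·log Σ_{z∈Z} p(z)^{1/(1+ρ)}. -/
open scoped BigOperators

noncomputable section

/-- The tilted distribution `p^ρ(z) = p(z)^{1/(1+ρ)} / Σ_s p(s)^{1/(1+ρ)}`. -/
def tilted {Z : Type*} [Fintype Z] (p : Z → ℝ) (ρ : ℝ) : Z → ℝ :=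
  fun z => p z ^ (1 / (1 + ρ)) / ∑ s, p s ^ (1 / (1 + ρ))

/-- Lemma 12: `D(p^ρ‖p) = ρ H(p^ρ) − (1+ρ) log Σ_z p(z)^{1/(1+ρ)}`. -/
theorem statement12 {Z : Type*} [Fintype Z] [Nonempty Z]
    (p : Z → ℝ) (hp : IsPMF p) (hpos : ∀ z, 0 < p z) (ρ : ℝ) (hρ : -1 < ρ) :
    klDiv (tilted p ρ) p =
      ρ * entropy (tilted p ρ) - (1 + ρ) * Real.log (∑ z, p z ^ (1 / (1 + ρ))) := by
  have h1 : (0:ℝ) < 1 + ρ := by linarith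
  set a : ℝ := 1 / (1 + ρ) with ha
  set S : ℝ := ∑ s, p s ^ a with hSdef
  have hS : 0 < S := Finset.sum_pos (fun s _ => Real.rpow_pos_of_pos (hpos s) _)
    Finset.univ_nonempty
  have hq1 : ∑ z, tilted p ρ z = 1 := by
    simp only [tilted, ← hSdef, ← Finset.sum_div]
    exact div_self hS.ne'
  have hqlog : ∀ z, Real.log (tilted p ρ z) = a * Real.log (p z) - Real.log S := by
    intro z
    rw [show tilted p ρ z = p z ^ a / S from rfl,
      Real.log_div (Real.rpow_pos_of_pos (hpos z) a).ne' hS.ne',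
      Real.log_rpow (hpos z)]
  set L : ℝ := ∑ z, tilted p ρ z * Real.log (p z) with hL
  have hD : klDiv (tilted p ρ) p = (a - 1) * L - Real.log S := by
    unfold klDiv
    calc ∑ z, tilted p ρ z * Real.log (tilted p ρ z / p z)
        = ∑ z, ((a - 1) * (tilted p ρ z * Real.log (p z)) - Real.log S * tilted p ρ z) := by
          apply Finset.sum_congr rfl
          intro z _
          rw [Real.log_div (by
            have := Real.rpow_pos_of_pos (hpos z) a
            exact (div_pos this hS).ne') (hpos z).ne', hqlog z]
          ring
      _ = (a - 1) * L - Real.log S := by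
          rw [Finset.sum_sub_distrib, ← Finset.mul_sum, ← Finset.mul_sum, hq1, hL]
          ring
  have hH : entropy (tilted p ρ) = -(a * L - Real.log S) := by
    unfold entropy
    have : ∑ z, tilted p ρ z * Real.log (tilted p ρ z)
        = ∑ z, (a * (tilted p ρ z * Real.log (p z)) - Real.log S * tilted p ρ z) := by
      apply Finset.sum_congr rfl
      intro z _
      rw [hqlog z]; ring
    rw [this, Finset.sum_sub_distrib, ← Finset.mul_sum, ← Finset.mul_sum, hq1, hL]
    ring
  rw [hD, hH]
  have haρ : a * (1 + ρ) = 1 := by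
    rw [ha]; field_simp
  have : a - 1 = -(ρ * a) := by nlinarith [haρ]
  rw [this]
  ring
end
end

section
/- For every ρ > −1, the Kullback–Leibler divergence of the x−y tilted distribution from p satisfies D(p̄^ρ‖p) = ρ·H_{p̄^ρ}(x|y) − log Σ_{y∈Y} (Σ_{x∈X} p(x,y)^{1/(1+ρ)})^{1+ρ}, where H_{p̄^ρ}(x|y) is the conditional entropy of the first coordinate given the second under p̄^ρ. -/
open scoped BigOperators

noncomputable section

/-- `D(y,ρ) = Σ_x p(x,y)^{1/(1+ρ)}`. -/
def Dt {X Y : Type*} [Fintype X] (p : X × Y → ℝ) (ρ : ℝ) (y : Y) : ℝ :=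
  ∑ x, p (x, y) ^ (1 / (1 + ρ))

/-- `B(ρ) = Σ_y D(y,ρ)^{1+ρ}`. -/
def Bt {X Y : Type*} [Fintype X] [Fintype Y] (p : X × Y → ℝ) (ρ : ℝ) : ℝ :=
  ∑ y, Dt p ρ y ^ (1 + ρ)

/-- The `x−y` tilted distribution
`p̄^ρ(x,y) = (D(y,ρ)^{1+ρ}/B(ρ)) · (p(x,y)^{1/(1+ρ)}/D(y,ρ))`. -/
def xyTilted {X Y : Type*} [Fintype X] [Fintype Y] (p : X × Y → ℝ) (ρ : ℝ) :
    X × Y → ℝ :=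
  fun z => (Dt p ρ z.2 ^ (1 + ρ) / Bt p ρ) * (p z ^ (1 / (1 + ρ)) / Dt p ρ z.2)

/-- Lemma 13: `D(p̄^ρ‖p) = ρ H_{p̄^ρ}(x|y) − log Σ_y (Σ_x p(x,y)^{1/(1+ρ)})^{1+ρ}`. -/
theorem statement13 {X Y : Type*} [Fintype X] [Fintype Y] [Nonempty X] [Nonempty Y]
    (p : X × Y → ℝ) (hp : IsPMF p) (hpos : ∀ z, 0 < p z) (ρ : ℝ) (hρ : -1 < ρ) :
    klDiv (xyTilted p ρ) p =
      ρ * condEntXY (xyTilted p ρ) - Real.log (Bt p ρ) := by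

  obtain ⟨hp0, hp1⟩ := hp
  have h1ρ : (0:ℝ) < 1 + ρ := by linarith
  set c : ℝ := 1 / (1 + ρ) with hc
  have hc1 : c * (1 + ρ) = 1 := by rw [hc]; field_simp
  have hD : ∀ y, 0 < Dt p ρ y := fun y =>
    Finset.sum_pos (fun x _ => Real.rpow_pos_of_pos (hpos (x, y)) _) Finset.univ_nonempty
  have hB : 0 < Bt p ρ :=
    Finset.sum_pos (fun y _ => Real.rpow_pos_of_pos (hD y) _) Finset.univ_nonempty
  set q := xyTilted p ρ with hqdef
  have hq : ∀ z, 0 < q z := fun z =>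
    mul_pos (div_pos (Real.rpow_pos_of_pos (hD z.2) _) hB)
      (div_pos (Real.rpow_pos_of_pos (hpos z) _) (hD z.2))
  have hlogq : ∀ z, Real.log (q z) =
      ρ * Real.log (Dt p ρ z.2) - Real.log (Bt p ρ) + c * Real.log (p z) := by
    intro z
    have : q z = (Dt p ρ z.2 ^ (1 + ρ) / Bt p ρ) * (p z ^ c / Dt p ρ z.2) := rfl
    rw [this,
      Real.log_mul (ne_of_gt (div_pos (Real.rpow_pos_of_pos (hD z.2) _) hB))
        (ne_of_gt (div_pos (Real.rpow_pos_of_pos (hpos z) _) (hD z.2))),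
      Real.log_div (ne_of_gt (Real.rpow_pos_of_pos (hD z.2) _)) (ne_of_gt hB),
      Real.log_div (ne_of_gt (Real.rpow_pos_of_pos (hpos z) _)) (ne_of_gt (hD z.2)),
      Real.log_rpow (hD z.2), Real.log_rpow (hpos z)]
    ring
  have hm : ∀ y, margY q y = Dt p ρ y ^ (1 + ρ) / Bt p ρ := by
    intro y
    have h1 : ∀ x, q (x, y) =
        (Dt p ρ y ^ (1 + ρ) / Bt p ρ / Dt p ρ y) * p (x, y) ^ c := by
      intro x
      show (Dt p ρ y ^ (1 + ρ) / Bt p ρ) * (p (x, y) ^ c / Dt p ρ y) = _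
      ring
    have h2 : (∑ x, p (x, y) ^ c) = Dt p ρ y := rfl
    calc margY q y = ∑ x, (Dt p ρ y ^ (1 + ρ) / Bt p ρ / Dt p ρ y) * p (x, y) ^ c :=
          Finset.sum_congr rfl (fun x _ => h1 x)
      _ = (Dt p ρ y ^ (1 + ρ) / Bt p ρ / Dt p ρ y) * Dt p ρ y := by
          rw [← Finset.mul_sum, h2]
      _ = Dt p ρ y ^ (1 + ρ) / Bt p ρ := div_mul_cancel₀ _ (ne_of_gt (hD y))
  have hsum1 : (∑ z, q z) = 1 := by
    rw [Fintype.sum_prod_type, Finset.sum_comm]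
    have : ∀ y, (∑ x, q (x, y)) = Dt p ρ y ^ (1 + ρ) / Bt p ρ := hm
    rw [Finset.sum_congr rfl (fun y _ => this y), ← Finset.sum_div]
    exact div_self (ne_of_gt hB)
  have hlogm : ∀ y, Real.log (margY q y) =
      (1 + ρ) * Real.log (Dt p ρ y) - Real.log (Bt p ρ) := by
    intro y
    rw [hm y, Real.log_div (ne_of_gt (Real.rpow_pos_of_pos (hD y) _)) (ne_of_gt hB), Real.log_rpow (hD y)]
  have hswap : ∀ h : Y → ℝ, (∑ z : X × Y, q z * h z.2) = ∑ y, margY q y * h y := by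
    intro h
    rw [Fintype.sum_prod_type, Finset.sum_comm]
    refine Finset.sum_congr rfl (fun y _ => ?_)
    show (∑ x, q (x, y) * h y) = (∑ x, q (x, y)) * h y
    rw [Finset.sum_mul]
  -- LHS
  have hL : klDiv q p = (∑ z, q z * (ρ * Real.log (Dt p ρ z.2) - ρ * c * Real.log (p z)))
      - Real.log (Bt p ρ) := by
    unfold klDiv
    have hpt : ∀ z : X × Y, q z * Real.log (q z / p z) =
        q z * (ρ * Real.log (Dt p ρ z.2) - ρ * c * Real.log (p z)) - q z * Real.log (Bt p ρ) := by
      intro z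
      rw [Real.log_div (ne_of_gt (hq z)) (ne_of_gt (hpos z)), hlogq z]
      linear_combination q z * Real.log (p z) * hc1
    rw [Finset.sum_congr rfl (fun z _ => hpt z), Finset.sum_sub_distrib,
      ← Finset.sum_mul, hsum1, one_mul]
  -- conditional entropy
  have hC : condEntXY q = ∑ z, q z * (Real.log (Dt p ρ z.2) - c * Real.log (p z)) := by
    unfold condEntXY entropy
    have h2 : (∑ y, margY q y * Real.log (margY q y)) =
        ∑ z : X × Y, q z * Real.log (margY q z.2) := (hswap _).symm
    rw [h2]
    rw [neg_sub_neg, ← Finset.sum_sub_distrib]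
    refine Finset.sum_congr rfl (fun z _ => ?_)
    rw [hlogm z.2, hlogq z]
    ring
  rw [hL, hC, Finset.mul_sum]
  congr 1
  refine Finset.sum_congr rfl (fun z _ => ?_)
  ring
end
end

section
/- The function ρ ↦ log Σ_{y∈Y} (Σ_{x∈X} p(x,y)^{1/(1+ρ)})^{1+ρ} is differentiable at every ρ > −1, with derivative at ρ equal to H_{p̄^ρ}(x|y), the conditional entropy of the first coordinate given the second under the x−y tilted distribution p̄^ρ. -/
/-! With `t = 1 + ρ`, `B` is a sum over `y` of power sums `(∑ₓ aₓ^{1/t})^t`, and the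
derivative in `t` of such a power sum is its value times the entropy of the normalized weights
`aₓ^{1/t} / ∑ aₓ^{1/t}`. Dividing by `B` turns the outer weights into the `y`-marginal
`D(y,ρ)^{1+ρ}/B(ρ)` of the tilted distribution, whose conditional rows are exactly those
normalized weights, so the chain rule `H(x|y) = ∑_y q(y) H(q(·|y))` identifies `(log B)'`
with `H_{p̄^ρ}(x|y)`. -/

open scoped BigOperators

noncomputable section

open Real Finset

theorem entropy_eq_sum_negMulLog {Z : Type*} [Fintype Z] (q : Z → ℝ) :
    entropy q = ∑ z, negMulLog (q z) := by
  simp only [entropy, negMulLog, neg_mul, sum_neg_distrib]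

theorem entropy_div_sum {Z : Type*} [Fintype Z] {b : Z → ℝ} (hb : ∑ z, b z ≠ 0) :
    entropy (fun z => b z / ∑ z', b z') =
      (∑ z, negMulLog (b z)) / ∑ z, b z + log (∑ z, b z) := by
  set S := ∑ z, b z
  have hnml : ∀ z, negMulLog (b z / S) = negMulLog (b z) / S + b z / S * log S := fun z => by
    rw [div_eq_mul_inv, negMulLog_mul]; simp only [negMulLog, log_inv]; ring
  rw [entropy_eq_sum_negMulLog, sum_congr rfl fun z _ => hnml z, sum_add_distrib, ← sum_div,
    ← sum_mul, ← sum_div, div_self hb, one_mul]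

theorem condEntXY_mul_eq_sum_mul_entropy {X Y : Type*} [Fintype X] [Fintype Y] {Q : Y → ℝ}
    {W : X × Y → ℝ} (hW : ∀ y, ∑ x, W (x, y) = 1) :
    condEntXY (fun z => Q z.2 * W z) = ∑ y, Q y * entropy (fun x => W (x, y)) := by
  have hmarg : margY (fun z : X × Y => Q z.2 * W z) = Q := funext fun y => by
    simp only [margY, ← mul_sum, hW, mul_one]
  rw [condEntXY, hmarg, entropy_eq_sum_negMulLog, entropy_eq_sum_negMulLog,
    Fintype.sum_prod_type_right]
  simp only [negMulLog_mul, sum_add_distrib, ← sum_mul, hW, one_mul, entropy_eq_sum_negMulLog,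
    mul_sum]
  ring

theorem hasDerivAt_rpow_one_div_one_add {a : ℝ} (ha : 0 < a) {ρ : ℝ} (hρ : 1 + ρ ≠ 0) :
    HasDerivAt (fun σ => a ^ (1 / (1 + σ)))
      (-(a ^ (1 / (1 + ρ)) * log a) / (1 + ρ) ^ 2) ρ := by
  have hinv : HasDerivAt (fun σ : ℝ => 1 / (1 + σ)) (-1 / (1 + ρ) ^ 2) ρ := by
    simpa only [one_div, neg_div] using ((hasDerivAt_id' ρ).const_add 1).fun_inv hρ
  convert hinv.const_rpow ha using 1
  ring

theorem hasDerivAt_sum_rpow_rpow {X : Type*} [Fintype X] [Nonempty X] {a : X → ℝ}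
    (ha : ∀ x, 0 < a x) {ρ : ℝ} (hρ : 1 + ρ ≠ 0) :
    HasDerivAt (fun σ => (∑ x, a x ^ (1 / (1 + σ))) ^ (1 + σ))
      ((∑ x, a x ^ (1 / (1 + ρ))) ^ (1 + ρ) *
        entropy (fun x => a x ^ (1 / (1 + ρ)) / ∑ x', a x' ^ (1 / (1 + ρ)))) ρ := by
  have hD : 0 < ∑ x, a x ^ (1 / (1 + ρ)) :=
    sum_pos (fun x _ => rpow_pos_of_pos (ha x) _) univ_nonempty
  have hsum : HasDerivAt (fun σ => ∑ x, a x ^ (1 / (1 + σ)))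
      (-(∑ x, a x ^ (1 / (1 + ρ)) * log (a x)) / (1 + ρ) ^ 2) ρ := by
    simpa only [← sum_div, ← sum_neg_distrib] using
      HasDerivAt.fun_sum fun x (_ : x ∈ univ) => hasDerivAt_rpow_one_div_one_add (ha x) hρ
  have hnml : ∑ x, negMulLog (a x ^ (1 / (1 + ρ))) =
      -(1 / (1 + ρ) * ∑ x, a x ^ (1 / (1 + ρ)) * log (a x)) := by
    simp only [negMulLog, log_rpow (ha _), mul_sum, ← sum_neg_distrib]
    exact sum_congr rfl fun x _ => by ring
  convert hsum.rpow ((hasDerivAt_id' ρ).const_add 1) hD using 1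
  rw [entropy_div_sum hD.ne', hnml, rpow_sub_one hD.ne']
  generalize ∑ x, a x ^ (1 / (1 + ρ)) = D at hD ⊢
  field_simp

theorem Dt_pos {X Y : Type*} [Fintype X] [Nonempty X] {p : X × Y → ℝ} (hpos : ∀ z, 0 < p z)
    (ρ : ℝ) (y : Y) : 0 < Dt p ρ y :=
  sum_pos (fun x _ => rpow_pos_of_pos (hpos (x, y)) _) univ_nonempty

theorem Bt_pos {X Y : Type*} [Fintype X] [Fintype Y] [Nonempty X] [Nonempty Y]
    {p : X × Y → ℝ} (hpos : ∀ z, 0 < p z) (ρ : ℝ) : 0 < Bt p ρ :=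
  sum_pos (fun y _ => rpow_pos_of_pos (Dt_pos hpos ρ y) _) univ_nonempty

theorem statement15_general {X Y : Type*} [Fintype X] [Fintype Y] [Nonempty X] [Nonempty Y]
    (p : X × Y → ℝ) (hpos : ∀ z, 0 < p z) (ρ : ℝ) (hρ : -1 < ρ) :
    HasDerivAt (fun σ : ℝ => Real.log (Bt p σ)) (condEntXY (xyTilted p ρ)) ρ := by
  have hρ' : 1 + ρ ≠ 0 := by linarith
  have hB : HasDerivAt (Bt p)
      (∑ y, Dt p ρ y ^ (1 + ρ) * entropy (fun x => p (x, y) ^ (1 / (1 + ρ)) / Dt p ρ y)) ρ :=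
    HasDerivAt.fun_sum fun y _ => hasDerivAt_sum_rpow_rpow (fun x => hpos (x, y)) hρ'
  have hrows : ∀ y, ∑ x, p (x, y) ^ (1 / (1 + ρ)) / Dt p ρ y = 1 := fun y => by
    rw [← sum_div]; exact div_self (Dt_pos hpos ρ y).ne'
  convert hB.log (Bt_pos hpos ρ).ne' using 1
  refine (condEntXY_mul_eq_sum_mul_entropy
    (Q := fun y => Dt p ρ y ^ (1 + ρ) / Bt p ρ) hrows).trans ?_
  rw [sum_div]
  exact sum_congr rfl fun y _ => by ring

/-- Lemma 15: `d/dρ [log Σ_y (Σ_x p(x,y)^{1/(1+ρ)})^{1+ρ}] = H_{p̄^ρ}(x|y)`. -/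
theorem statement15 {X Y : Type*} [Fintype X] [Fintype Y] [Nonempty X] [Nonempty Y]
    (p : X × Y → ℝ) (hp : IsPMF p) (hpos : ∀ z, 0 < p z) (ρ : ℝ) (hρ : -1 < ρ) :
    HasDerivAt (fun σ : ℝ => Real.log (Bt p σ)) (condEntXY (xyTilted p ρ)) ρ :=
  statement15_general p hpos ρ hρ
end
end
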